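/- arXiv:2008.00463 — 5 statements merged into one kernel-verified Lean document; each statement's English description precedes it below -/
import Mathlib

section
/- Let P̃ : (Π_i X_i) → ℝ be strictly positive with Σ_x P̃(x) = 1, and assume P̃ satisfies the Markov factorization P̃(x) = Π_{i=0}^{n−1} P̃(x_i = x_i ∣ pa(i) = x↾pa(i)) for every x. Then for every tuple of exogenous distributions (p_i)_i, the induced endogenous distribution Q equals P̃ if and only if for every i ∈ {0,…,n−1}, every a ∈ X_i and every parent assignment π ∈ Π_{j∈pa(i)} X_j one has Σ_{u ∈ U_i : f_i(u)(π) = a} p_i(u) = P̃(x_i = a ∣ pa(i) = π). (That is, the exogenous probability mass functions consistent with the empirical distribution are exactly the solutions of the linear constraints produced by Algorithm 1.) -/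
open Finset
open scoped Classical

variable {n : ℕ}

/-- Restriction of a joint endogenous configuration `x` to the coordinates in `S`. -/
def restr {X : Fin n → Type} (S : Finset (Fin n)) (x : ∀ i, X i) : ∀ j : S, X j :=
  fun j => x j

/-- Marginal of `R` over the coordinates in `S`. -/
noncomputable def marg {X : Fin n → Type} [∀ i, Fintype (X i)]
    (R : (∀ i, X i) → ℝ) (S : Finset (Fin n)) (v : ∀ j : S, X j) : ℝ :=
  ∑ x : ∀ i, X i, if restr S x = v then R x else 0

/-- Conditional probability `R(x_i = a | S = v)`. -/
noncomputable def cpr {X : Fin n → Type} [∀ i, Fintype (X i)]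
    (R : (∀ i, X i) → ℝ) (i : Fin n) (S : Finset (Fin n)) (a : X i) (v : ∀ j : S, X j) : ℝ :=
  (∑ x : ∀ i, X i, if x i = a ∧ restr S x = v then R x else 0) / marg R S v

lemma restr_update {X : Fin n → Type} {S : Finset (Fin n)} {i : Fin n} (h : i ∉ S)
    (x : ∀ j, X j) (v : X i) :
    restr S (Function.update x i v) = restr S x := by
  funext j
  exact Function.update_of_ne (by rintro rfl; exact h j.2) v x

lemma sum_out {X : Fin n → Type} [∀ i, Fintype (X i)] {i : Fin n}
    (ψ : (∀ j, X j) → ℝ) (hψ : ∀ x v, ψ (Function.update x i v) = ψ x)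
    {P : Finset (Fin n)} (hiP : i ∉ P)
    (k : X i → (∀ j : P, X j) → ℝ) (hk : ∀ π, ∑ b, k b π = 1)
    (a : X i) :
    (∑ x : ∀ j, X j, ψ x * k (x i) (restr P x))
      = ∑ x : ∀ j, X j, if x i = a then ψ x else 0 := by
  classical
  rw [← (Equiv.piSplitAt i X).symm.sum_comp (fun x => ψ x * k (x i) (restr P x)),
      ← (Equiv.piSplitAt i X).symm.sum_comp (fun x => if x i = a then ψ x else 0)]
  rw [Fintype.sum_prod_type_right, Fintype.sum_prod_type_right]
  refine Finset.sum_congr rfl fun y _ => ?_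
  have hupd : ∀ v : X i, (Equiv.piSplitAt i X).symm (v, y)
      = Function.update ((Equiv.piSplitAt i X).symm (a, y)) i v := by
    intro v; funext j
    rcases eq_or_ne j i with rfl | hj
    · simp
    · simp [Function.update_of_ne hj, Equiv.piSplitAt_symm_apply, hj]
  have hi : ∀ v : X i, (Equiv.piSplitAt i X).symm (v, y) i = v := by
    intro v; simp
  calc (∑ v : X i, ψ ((Equiv.piSplitAt i X).symm (v, y)) *
          k ((Equiv.piSplitAt i X).symm (v, y) i) (restr P ((Equiv.piSplitAt i X).symm (v, y))))
      = ∑ v : X i, ψ ((Equiv.piSplitAt i X).symm (a, y)) *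
          k v (restr P ((Equiv.piSplitAt i X).symm (a, y))) := by
        refine Finset.sum_congr rfl fun v _ => ?_
        rw [hupd v, hψ, Function.update_self, restr_update hiP]
    _ = ψ ((Equiv.piSplitAt i X).symm (a, y)) := by
        rw [← Finset.mul_sum, hk, mul_one]
    _ = ∑ v : X i, if (Equiv.piSplitAt i X).symm (v, y) i = a
          then ψ ((Equiv.piSplitAt i X).symm (v, y)) else 0 := by
        simp only [hi]
        rw [Finset.sum_ite_eq' Finset.univ a (fun v => ψ ((Equiv.piSplitAt i X).symm (v, y)))]
        simp

lemma filter_succ_eq (m : ℕ) (hm : m < n) :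
    Finset.univ.filter (fun j : Fin n => j.val < m + 1)
      = insert (⟨m, hm⟩ : Fin n) (Finset.univ.filter (fun j : Fin n => j.val < m)) := by
  ext j
  simp only [Finset.mem_filter, Finset.mem_insert, Finset.mem_univ, true_and, Fin.ext_iff]
  omega

lemma prod_filter_indep {X : Fin n → Type} [∀ i, Fintype (X i)]
    (pa : Fin n → Finset (Fin n)) (hpa : ∀ i, ∀ j ∈ pa i, j < i)
    (g : ∀ j, X j → (∀ k : pa j, X k) → ℝ)
    {m : ℕ} (im : Fin n) (him : m ≤ im.val) (x : ∀ j, X j) (v : X im) :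
    (∏ j ∈ Finset.univ.filter (fun j : Fin n => j.val < m),
        g j (Function.update x im v j) (restr (pa j) (Function.update x im v)))
      = ∏ j ∈ Finset.univ.filter (fun j : Fin n => j.val < m),
        g j (x j) (restr (pa j) x) := by
  refine Finset.prod_congr rfl fun j hj => ?_
  simp only [Finset.mem_filter, Finset.mem_univ, true_and] at hj
  have hjm : j ≠ im := by intro h; subst h; omega
  have hmem : im ∉ pa j := fun hmem => by
    have := hpa j im hmem; have : im.val < j.val := this; omega
  rw [Function.update_of_ne hjm, restr_update hmem]

lemma tele {X : Fin n → Type} [∀ i, Fintype (X i)]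
    (pa : Fin n → Finset (Fin n)) (hpa : ∀ i, ∀ j ∈ pa i, j < i)
    (g : ∀ j, X j → (∀ k : pa j, X k) → ℝ)
    (hg : ∀ j π, ∑ b, g j b π = 1)
    (x₀ : ∀ j, X j) (φ : (∀ j, X j) → ℝ) (m : ℕ)
    (hφ : ∀ (j : Fin n), m ≤ j.val → ∀ x v, φ (Function.update x j v) = φ x) :
    (∑ x : ∀ j, X j, φ x * ∏ j, g j (x j) (restr (pa j) x))
      = ∑ x : ∀ j, X j, if (∀ j : Fin n, m ≤ j.val → x j = x₀ j) then
          φ x * ∏ j ∈ Finset.univ.filter (fun j : Fin n => j.val < m),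
            g j (x j) (restr (pa j) x) else 0 := by
  classical
  suffices H : ∀ (k m : ℕ), n - m = k →
      (∀ (j : Fin n), m ≤ j.val → ∀ x v, φ (Function.update x j v) = φ x) →
      (∑ x : ∀ j, X j, φ x * ∏ j, g j (x j) (restr (pa j) x))
      = ∑ x : ∀ j, X j, if (∀ j : Fin n, m ≤ j.val → x j = x₀ j) then
          φ x * ∏ j ∈ Finset.univ.filter (fun j : Fin n => j.val < m),
            g j (x j) (restr (pa j) x) else 0 by
    exact H (n - m) m rfl hφ
  clear hφ m
  intro k
  induction k with
  | zero =>
    intro m hm _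
    have hnm : n ≤ m := by omega
    have h1 : Finset.univ.filter (fun j : Fin n => j.val < m) = Finset.univ := by
      ext j; simp only [Finset.mem_filter, Finset.mem_univ, true_and, iff_true]
      exact lt_of_lt_of_le j.isLt hnm
    refine Finset.sum_congr rfl fun x _ => ?_
    rw [if_pos, h1]
    intro j hj; exact absurd (lt_of_lt_of_le j.isLt hnm) (by omega)
  | succ k ih =>
    intro m hm hφ
    have hmn : m < n := by omega
    set im : Fin n := ⟨m, hmn⟩ with him
    have step1 := ih (m + 1) (by omega)
      (fun j hj x v => hφ j (by omega) x v)
    rw [step1]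
    set ψ : (∀ j, X j) → ℝ := fun x =>
      if (∀ j : Fin n, m + 1 ≤ j.val → x j = x₀ j) then
        φ x * ∏ j ∈ Finset.univ.filter (fun j : Fin n => j.val < m),
          g j (x j) (restr (pa j) x) else 0 with hψdef
    have hψ : ∀ x v, ψ (Function.update x im v) = ψ x := by
      intro x v
      have hne : ∀ j : Fin n, m + 1 ≤ j.val → j ≠ im := by
        intro j hj hji; rw [hji] at hj; simp [him] at hj
      have hcond : (∀ j : Fin n, m + 1 ≤ j.val → Function.update x im v j = x₀ j)
          ↔ (∀ j : Fin n, m + 1 ≤ j.val → x j = x₀ j) := by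
        constructor
        · intro h j hj
          rw [← h j hj, Function.update_of_ne (hne j hj)]
        · intro h j hj
          rw [Function.update_of_ne (hne j hj)]
          exact h j hj
      simp only [hψdef]
      rw [hφ im (le_refl m) x v, prod_filter_indep pa hpa g im (le_refl m) x v]
      by_cases h : ∀ j : Fin n, m + 1 ≤ j.val → x j = x₀ j
      · rw [if_pos (hcond.mpr h), if_pos h]
      · rw [if_neg (fun hh => h (hcond.mp hh)), if_neg h]
    have himpa : im ∉ pa im := fun h => absurd (hpa im im h) (lt_irrefl im)
    have key := sum_out ψ hψ himpa (g im) (hg im) (x₀ im)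
    calc (∑ x : ∀ j, X j, if (∀ j : Fin n, m + 1 ≤ j.val → x j = x₀ j) then
          φ x * ∏ j ∈ Finset.univ.filter (fun j : Fin n => j.val < m + 1),
            g j (x j) (restr (pa j) x) else 0)
        = ∑ x : ∀ j, X j, ψ x * g im (x im) (restr (pa im) x) := by
          refine Finset.sum_congr rfl fun x _ => ?_
          rw [filter_succ_eq m hmn, Finset.prod_insert (by simp)]
          simp only [hψdef]
          split_ifs with h
          · ring
          · rw [zero_mul]
      _ = ∑ x : ∀ j, X j, if x im = x₀ im then ψ x else 0 := key
      _ = _ := by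
          refine Finset.sum_congr rfl fun x _ => ?_
          simp only [hψdef]
          have hcond : (x im = x₀ im ∧ ∀ j : Fin n, m + 1 ≤ j.val → x j = x₀ j)
              ↔ (∀ j : Fin n, m ≤ j.val → x j = x₀ j) := by
            constructor
            · rintro ⟨h1, h2⟩ j hj
              rcases eq_or_lt_of_le hj with he | hl
              · have : j = im := by apply Fin.ext; simp [him, ← he]
                rw [this]; exact h1
              · exact h2 j hl
            · intro h
              exact ⟨h im (le_refl m), fun j hj => h j (by omega)⟩
          by_cases h1 : x im = x₀ im <;> by_cases h2 : ∀ j : Fin n, m + 1 ≤ j.val → x j = x₀ j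
          · rw [if_pos h1, if_pos h2, if_pos (hcond.mp ⟨h1, h2⟩)]
          · rw [if_pos h1, if_neg h2, if_neg (fun h => h2 (hcond.mpr h).2)]
          · rw [if_neg h1, if_neg (fun h => h1 (hcond.mpr h).1)]
          · rw [if_neg h1, if_neg (fun h => h1 (hcond.mpr h).1)]

lemma key_lemma {X : Fin n → Type} [∀ i, Fintype (X i)] [∀ i, Nonempty (X i)]
    (pa : Fin n → Finset (Fin n)) (hpa : ∀ i, ∀ j ∈ pa i, j < i)
    (g : ∀ j, X j → (∀ k : pa j, X k) → ℝ)
    (hg : ∀ j π, ∑ b, g j b π = 1)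
    (i : Fin n) (a : X i) (π : ∀ j : pa i, X j) :
    (∑ x : ∀ j, X j, if x i = a ∧ restr (pa i) x = π then
        ∏ j, g j (x j) (restr (pa j) x) else 0)
    = g i a π * ∑ x : ∀ j, X j, if restr (pa i) x = π then
        ∏ j, g j (x j) (restr (pa j) x) else 0 := by
  classical
  set x₀ : ∀ j, X j := Function.update (fun j => Classical.arbitrary (X j)) i a with hx₀def
  have hx₀ : x₀ i = a := by simp [hx₀def]
  have hjpa : ∀ j : Fin n, i.val ≤ j.val → j ∉ pa i := by
    intro j hj hmem
    have := hpa i j hmem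
    have : j.val < i.val := this
    omega
  have hN := tele pa hpa g hg x₀
    (fun x => if x i = a ∧ restr (pa i) x = π then (1:ℝ) else 0) (i.val + 1) ?_
  swap
  · intro j hj x v
    have hij : i ≠ j := by intro h; rw [h] at hj; omega
    simp only [Function.update_of_ne hij, restr_update (hjpa j (by omega))]
  have hM := tele pa hpa g hg x₀
    (fun x => if restr (pa i) x = π then (1:ℝ) else 0) i.val ?_
  swap
  · intro j hj x v
    simp only [restr_update (hjpa j hj)]
  simp only [boole_mul] at hN hM
  rw [hN, hM, Finset.mul_sum]
  refine Finset.sum_congr rfl fun x _ => ?_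
  have hA' : (∀ j : Fin n, i.val ≤ j.val → x j = x₀ j)
      ↔ (x i = a ∧ ∀ j : Fin n, i.val + 1 ≤ j.val → x j = x₀ j) := by
    constructor
    · intro h; exact ⟨(h i le_rfl).trans hx₀, fun j hj => h j (by omega)⟩
    · rintro ⟨h1, h2⟩ j hj
      rcases eq_or_lt_of_le hj with he | hl
      · have hji : j = i := Fin.ext he.symm
        rw [hji, h1, hx₀]
      · exact h2 j hl
  rw [filter_succ_eq i.val i.isLt, Finset.prod_insert (by simp)]
  simp only [Fin.eta]
  by_cases hr : restr (pa i) x = π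
  · by_cases hB : x i = a
    · by_cases hA : ∀ j : Fin n, i.val + 1 ≤ j.val → x j = x₀ j
      · rw [if_pos hA, if_pos (show x i = a ∧ restr (pa i) x = π from ⟨hB, hr⟩),
            if_pos (hA'.mpr ⟨hB, hA⟩), if_pos hr, hB, hr]
      · rw [if_neg hA, if_neg (fun h => hA (hA'.mp h).2), mul_zero]
    · have hA'f : ¬(∀ j : Fin n, i.val ≤ j.val → x j = x₀ j) := fun h => hB (hA'.mp h).1
      have hBf : ¬(x i = a ∧ restr (pa i) x = π) := fun h => hB h.1
      rw [if_neg hA'f, mul_zero, if_neg hBf, ite_self]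
  · have hBf : ¬(x i = a ∧ restr (pa i) x = π) := fun h => hr h.2
    rw [if_neg hBf, ite_self, if_neg hr, ite_self, mul_zero]

/-- Theorem 1, Markovian identification: given a strictly positive
empirical PMF `Ptilde` satisfying the Markov factorization, a tuple of exogenous
distributions induces `Ptilde` iff it satisfies the linear constraints of Algorithm 1. -/
theorem markovian_identification
    (X U : Fin n → Type)
    [∀ i, Fintype (X i)] [∀ i, Nonempty (X i)]
    [∀ i, Fintype (U i)] [∀ i, Nonempty (U i)]
    (pa : Fin n → Finset (Fin n)) (hpa : ∀ i, ∀ j ∈ pa i, j < i)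
    (f : ∀ i, U i → (∀ j : pa i, X j) → X i)
    (Ptilde : (∀ i, X i) → ℝ)
    (hpos : ∀ x, 0 < Ptilde x) (hsum : ∑ x, Ptilde x = 1)
    (hfact : ∀ x, Ptilde x = ∏ i, cpr Ptilde i (pa i) (x i) (restr (pa i) x))
    (p : ∀ i, U i → ℝ)
    (hp0 : ∀ i u, 0 ≤ p i u) (hp1 : ∀ i, ∑ u, p i u = 1) :
    (∀ x, (∑ u : ∀ i, U i, ∏ i, p i (u i) *
        (if f i (u i) (restr (pa i) x) = x i then (1 : ℝ) else 0)) = Ptilde x)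
      ↔ (∀ (i : Fin n) (a : X i) (π : ∀ j : pa i, X j),
          (∑ u : U i, if f i u π = a then p i u else 0) = cpr Ptilde i (pa i) a π) := by
  classical
  set g : ∀ i, X i → (∀ j : pa i, X j) → ℝ :=
    fun i b π => ∑ u : U i, if f i u π = b then p i u else 0 with hgdef
  have hg1 : ∀ i π, ∑ b, g i b π = 1 := by
    intro i π
    rw [hgdef]
    rw [Finset.sum_comm]
    calc (∑ u : U i, ∑ b : X i, if f i u π = b then p i u else 0)
        = ∑ u : U i, p i u := by
          refine Finset.sum_congr rfl fun u _ => ?_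
          rw [Finset.sum_ite_eq Finset.univ (f i u π) (fun _ => p i u)]
          simp
      _ = 1 := hp1 i
  have hQ : ∀ x : ∀ i, X i, (∑ u : ∀ i, U i, ∏ i, p i (u i) *
        (if f i (u i) (restr (pa i) x) = x i then (1 : ℝ) else 0))
      = ∏ i, g i (x i) (restr (pa i) x) := by
    intro x
    rw [hgdef]
    rw [Fintype.prod_sum fun i u => if f i u (restr (pa i) x) = x i then p i u else 0]
    refine Finset.sum_congr rfl fun u _ => Finset.prod_congr rfl fun i _ => ?_
    split <;> simp
  have hmarg : ∀ (i : Fin n) (π : ∀ j : pa i, X j),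
      0 < ∑ x : ∀ i, X i, if restr (pa i) x = π then Ptilde x else 0 := by
    intro i π
    have hex : ∃ x : ∀ j, X j, restr (pa i) x = π := by
      refine ⟨fun j => if h : j ∈ pa i then π ⟨j, h⟩ else Classical.arbitrary (X j), ?_⟩
      funext j
      simp [restr, j.2]
    obtain ⟨x, hx⟩ := hex
    refine Finset.sum_pos' (fun y _ => ?_) ⟨x, Finset.mem_univ x, ?_⟩
    · split
      · exact (hpos y).le
      · exact le_refl 0
    · rw [if_pos hx]; exact (hpos x)
  constructor
  · intro h i a π
    have hPg : ∀ x : ∀ i, X i, (∏ j, g j (x j) (restr (pa j) x)) = Ptilde x :=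
      fun x => (hQ x).symm.trans (h x)
    have hkey := key_lemma pa hpa g hg1 i a π
    simp only [hPg] at hkey
    have hm := hmarg i π
    rw [cpr, marg, eq_div_iff (ne_of_gt hm)]
    exact hkey.symm
  · intro h x
    rw [hQ x, hfact x]
    refine Finset.prod_congr rfl fun i _ => ?_
    exact h i (x i) (restr (pa i) x)
end

section
/- For every tuple of exogenous distributions (p_i)_i with induced endogenous distribution Q, for every i ∈ {0,…,n−1}, every a ∈ X_i and every parent assignment π ∈ Π_{j∈pa(i)} X_j with Q_{pa(i)}(π) > 0, one has Q(x_i = a ∣ pa(i) = π) = Σ_{u ∈ U_i : f_i(u)(π) = a} p_i(u). (The conditional probability of an endogenous variable given its endogenous parents is the mixture of its degenerate structural-equation CPT over the marginal of its exogenous parent.) -/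
open Finset
open scoped Classical

variable {n : ℕ}

/-- The unique solution of the structural equations for a given exogenous configuration. -/
def solve {X U : Fin n → Type} (pa : Fin n → Finset (Fin n))
    (hpa : ∀ i, ∀ j ∈ pa i, j < i)
    (f : ∀ i, U i → (∀ j : pa i, X j) → X i)
    (u : ∀ i, U i) (i : Fin n) : X i :=
  f i (u i) (fun j => solve pa hpa f u j)
termination_by (i : ℕ)
decreasing_by exact hpa i j j.2

lemma solve_congr {X U : Fin n → Type} (pa : Fin n → Finset (Fin n))
    (hpa : ∀ i, ∀ j ∈ pa i, j < i)
    (f : ∀ i, U i → (∀ j : pa i, X j) → X i)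
    (u u' : ∀ i, U i)
    (j : Fin n) (h : ∀ k, k ≤ j → u k = u' k) :
    solve pa hpa f u j = solve pa hpa f u' j := by
  rw [solve, solve, h j le_rfl]
  congr 1
  funext k
  exact solve_congr pa hpa f u u' k
    (fun m hm => h m (le_of_lt (lt_of_le_of_lt hm (hpa j k k.2))))
termination_by (j : ℕ)
decreasing_by exact hpa j k k.2

lemma solve_unique_pt {X U : Fin n → Type} (pa : Fin n → Finset (Fin n))
    (hpa : ∀ i, ∀ j ∈ pa i, j < i)
    (f : ∀ i, U i → (∀ j : pa i, X j) → X i)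
    (x : ∀ i, X i) (u : ∀ i, U i)
    (h : ∀ i, f i (u i) (restr (pa i) x) = x i) (j : Fin n) :
    x j = solve pa hpa f u j := by
  rw [solve, ← h j]
  congr 1
  funext k
  exact solve_unique_pt pa hpa f x u h k
termination_by (j : ℕ)
decreasing_by exact hpa j k k.2

lemma solve_unique {X U : Fin n → Type} (pa : Fin n → Finset (Fin n))
    (hpa : ∀ i, ∀ j ∈ pa i, j < i)
    (f : ∀ i, U i → (∀ j : pa i, X j) → X i)
    (x : ∀ i, X i) (u : ∀ i, U i)
    (h : ∀ i, f i (u i) (restr (pa i) x) = x i) : x = solve pa hpa f u :=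
  funext (solve_unique_pt pa hpa f x u h)

lemma sum_split {U : Fin n → Type} [∀ j, Fintype (U j)] (i : Fin n)
    (u0 : U i) (A : U i → ℝ) (B : (∀ j, U j) → ℝ)
    (hB : ∀ u w, B (Function.update u i w) = B u) :
    ∑ u : ∀ j, U j, A (u i) * B u =
      (∑ w, A w) * ∑ r : ∀ j : { j // j ≠ i }, U j,
        B ((Equiv.piSplitAt i U).symm (u0, r)) := by
  rw [← Equiv.sum_comp (Equiv.piSplitAt i U).symm (fun u => A (u i) * B u),
    Fintype.sum_prod_type, Finset.sum_mul]
  refine Finset.sum_congr rfl fun w _ => ?_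
  rw [Finset.mul_sum]
  refine Finset.sum_congr rfl fun r _ => ?_
  have h1 : ((Equiv.piSplitAt i U).symm (w, r)) i = w := by
    simp [Equiv.piSplitAt]
  have h2 : (Equiv.piSplitAt i U).symm (w, r) =
      Function.update ((Equiv.piSplitAt i U).symm (u0, r)) i w := by
    funext j
    by_cases hj : j = i
    · subst hj; simp [Equiv.piSplitAt, Function.update]
    · simp [Equiv.piSplitAt, Function.update, hj]
  rw [h1, h2, hB]

set_option maxHeartbeats 1000000 in
/-- in a Markovian PSCM, the conditional probability of an endogenous
variable given its endogenous parents is the mixture of its structural-equation CPT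
over the marginal PMF of its exogenous parent. -/
theorem cond_eq_mixture_of_exogenous
    (X U : Fin n → Type)
    [∀ i, Fintype (X i)] [∀ i, Nonempty (X i)]
    [∀ i, Fintype (U i)] [∀ i, Nonempty (U i)]
    (pa : Fin n → Finset (Fin n)) (hpa : ∀ i, ∀ j ∈ pa i, j < i)
    (f : ∀ i, U i → (∀ j : pa i, X j) → X i)
    (p : ∀ i, U i → ℝ)
    (hp0 : ∀ i u, 0 ≤ p i u) (hp1 : ∀ i, ∑ u, p i u = 1)
    (Q : (∀ i, X i) → ℝ)
    (hQ : ∀ x, Q x = ∑ u : ∀ i, U i, ∏ i, p i (u i) *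
        (if f i (u i) (restr (pa i) x) = x i then (1 : ℝ) else 0))
    (i : Fin n) (a : X i) (π : ∀ j : pa i, X j)
    (hπ : 0 < marg Q (pa i) π) :
    cpr Q i (pa i) a π = ∑ u : U i, if f i u π = a then p i u else 0 := by
  -- collapse Q to a sum of point masses at `solve`
  have hQ' : ∀ x, Q x = ∑ u : ∀ j, U j,
      if x = solve pa hpa f u then ∏ j, p j (u j) else 0 := by
    intro x
    rw [hQ x]
    refine Finset.sum_congr rfl fun u _ => ?_
    rw [Finset.prod_mul_distrib]
    by_cases h : x = solve pa hpa f u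
    · subst h
      have : ∀ j : Fin n, f j (u j) (restr (pa j) (solve pa hpa f u)) = solve pa hpa f u j := by
        intro j
        conv_rhs => rw [solve]
        rfl
      simp only [this, if_pos rfl, if_pos]
      rw [Finset.prod_const_one, mul_one]
    · have : ¬ ∀ j, f j (u j) (restr (pa j) x) = x j := fun hh =>
        h (solve_unique pa hpa f x u hh)
      push_neg at this
      obtain ⟨j, hj⟩ := this
      rw [if_neg h]
      have hz : (∏ j : Fin n, if f j (u j) (restr (pa j) x) = x j then (1:ℝ) else 0) = 0 :=
        Finset.prod_eq_zero (Finset.mem_univ j) (if_neg hj)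
      rw [hz, mul_zero]
  -- general collapsing of conditioned sums
  have sum_cond : ∀ (φ : (∀ j, X j) → Prop) (inst : DecidablePred φ),
      (∑ x : ∀ j, X j, @ite ℝ (φ x) (inst x) (Q x) 0) =
        ∑ u : ∀ j, U j, if φ (solve pa hpa f u) then ∏ j, p j (u j) else 0 := by
    intro φ inst
    calc ∑ x : ∀ j, X j, (@ite ℝ (φ x) (inst x) (Q x) 0)
        = ∑ x : ∀ j, X j, ∑ u : ∀ j, U j,
            @ite ℝ (φ x) (inst x) (if x = solve pa hpa f u then ∏ j, p j (u j) else 0) 0 := by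
          refine Finset.sum_congr rfl fun x _ => ?_
          by_cases h : φ x
          · simp only [if_pos h, hQ' x]
          · simp [if_neg h]
      _ = ∑ u : ∀ j, U j, ∑ x : ∀ j, X j,
            if x = solve pa hpa f u then (@ite ℝ (φ x) (inst x) (∏ j, p j (u j)) 0) else 0 := by
          rw [Finset.sum_comm]
          refine Finset.sum_congr rfl fun u _ => Finset.sum_congr rfl fun x _ => ?_
          by_cases h1 : φ x <;> by_cases h2 : x = solve pa hpa f u <;> simp [h1, h2]
      _ = ∑ u : ∀ j, U j, if φ (solve pa hpa f u) then ∏ j, p j (u j) else 0 := by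
          refine Finset.sum_congr rfl fun u _ => ?_
          simp
  obtain ⟨u0⟩ := ‹∀ j, Nonempty (U j)› i
  set B : (∀ j, U j) → ℝ := fun u =>
    if restr (pa i) (solve pa hpa f u) = π then ∏ j ∈ {i}ᶜ, p j (u j) else 0 with hBdef
  have hrestr : ∀ u w, restr (pa i) (solve pa hpa f (Function.update u i w)) =
      restr (pa i) (solve pa hpa f u) := by
    intro u w
    funext j
    have hj : (j : Fin n) < i := hpa i j j.2
    exact solve_congr pa hpa f _ _ j (fun k hk =>
      Function.update_of_ne (by exact ne_of_lt (lt_of_le_of_lt hk hj)) _ _)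
  have hB : ∀ u w, B (Function.update u i w) = B u := by
    intro u w
    simp only [hBdef, hrestr]
    congr 1
    refine Finset.prod_congr rfl fun j hj => ?_
    rw [Function.update_of_ne (Finset.mem_compl.mp hj ∘ Finset.mem_singleton.mpr ∘ Eq.symm ∘ Eq.symm)]
  have hsolve_i : ∀ u : ∀ j, U j,
      solve pa hpa f u i = f i (u i) (restr (pa i) (solve pa hpa f u)) := by
    intro u; conv_lhs => rw [solve]
    rfl
  have hsplit : ∀ u : ∀ j, U j, ∏ j, p j (u j) = p i (u i) * ∏ j ∈ {i}ᶜ, p j (u j) :=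
    fun u => Fintype.prod_eq_mul_prod_compl i _
  have hnum_term : ∀ u : ∀ j, U j,
      (if (solve pa hpa f u i = a ∧ restr (pa i) (solve pa hpa f u) = π)
        then ∏ j, p j (u j) else 0) = (if f i (u i) π = a then p i (u i) else 0) * B u := by
    intro u
    by_cases h2 : restr (pa i) (solve pa hpa f u) = π
    · have hsol : solve pa hpa f u i = f i (u i) π := by rw [hsolve_i, h2]
      simp only [hBdef, if_pos h2, hsol]
      by_cases h1 : f i (u i) π = a
      · rw [if_pos ⟨h1, h2⟩, if_pos h1, hsplit]
      · rw [if_neg (fun hh => h1 hh.1), if_neg h1, zero_mul]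
    · simp only [hBdef, if_neg h2, mul_zero,
        if_neg (fun hh : _ ∧ _ => h2 hh.2)]
  have hmarg_term : ∀ u : ∀ j, U j,
      (if restr (pa i) (solve pa hpa f u) = π then ∏ j, p j (u j) else 0) =
        p i (u i) * B u := by
    intro u
    by_cases h2 : restr (pa i) (solve pa hpa f u) = π
    · simp only [hBdef, if_pos h2, hsplit u]
    · simp only [hBdef, if_neg h2, mul_zero]
  set D : ℝ := ∑ r : ∀ j : { j // j ≠ i }, U j, B ((Equiv.piSplitAt i U).symm (u0, r)) with hD
  have hmarg : marg Q (pa i) π = D := by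
    have h1 : marg Q (pa i) π = ∑ u : ∀ j, U j,
        if restr (pa i) (solve pa hpa f u) = π then ∏ j, p j (u j) else 0 := by
      rw [marg]; exact sum_cond (fun x => restr (pa i) x = π) _
    rw [h1]
    calc (∑ u : ∀ j, U j, if restr (pa i) (solve pa hpa f u) = π then ∏ j, p j (u j) else 0)
        = ∑ u : ∀ j, U j, p i (u i) * B u := Finset.sum_congr rfl fun u _ => hmarg_term u
      _ = (∑ w, p i w) * D := sum_split i u0 (p i) B hB
      _ = D := by rw [hp1 i, one_mul]
  have hnum : (∑ x : ∀ j, X j, if x i = a ∧ restr (pa i) x = π then Q x else 0) =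
      (∑ w : U i, if f i w π = a then p i w else 0) * D := by
    have h1 : (∑ x : ∀ j, X j, if x i = a ∧ restr (pa i) x = π then Q x else 0) =
        ∑ u : ∀ j, U j, if (solve pa hpa f u i = a ∧ restr (pa i) (solve pa hpa f u) = π)
          then ∏ j, p j (u j) else 0 :=
      sum_cond (fun x => x i = a ∧ restr (pa i) x = π) _
    rw [h1]
    calc (∑ u : ∀ j, U j, if (solve pa hpa f u i = a ∧ restr (pa i) (solve pa hpa f u) = π)
          then ∏ j, p j (u j) else 0)
        = ∑ u : ∀ j, U j, (if f i (u i) π = a then p i (u i) else 0) * B u :=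
          Finset.sum_congr rfl fun u _ => hnum_term u
      _ = (∑ w : U i, if f i w π = a then p i w else 0) * D :=
          sum_split i u0 (fun w => if f i w π = a then p i w else 0) B hB
  have hD0 : D ≠ 0 := by rw [← hmarg]; exact ne_of_gt hπ
  rw [cpr, hnum, hmarg, mul_div_assoc, div_self hD0, mul_one]
end

section
/- Define the full joint J(x,u) := Π_i p_i(u_i)·1[f_i(u_i)(x↾pa(i)) = x_i] over (x,u) ∈ (Π_i X_i) × (Π_i U_i). Then for every i ∈ {0,…,n−1}, every u* ∈ U_i and every parent assignment π ∈ Π_{j∈pa(i)} X_j, one has Σ_{(x,u) : u_i = u*, x↾pa(i) = π} J(x,u) = p_i(u*) · Q_{pa(i)}(π). (Each exogenous variable U_i is independent of the endogenous parents of its child X_i; this is the d-separation step used in the proof of the Markovian identification theorem.) -/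
open Finset
open scoped Classical

variable {n : ℕ}

/-!
Since the parent sets respect the topological order, the structural equations have exactly one
solution `x = structuralSolution u` for every exogenous input `u`, so the joint weight is
`J x u = (∏ k, p k (u k)) · 1[x = structuralSolution u]` and both sides reduce to sums over `u`
alone. The parent values `(structuralSolution u)↾pa(i)` only involve the coordinates `u k` with
`k < i`, so the event `Pa(X_i) = π` does not depend on `u i`; under the product weight
`∏ k, p k (u k)` it is therefore independent of the event `u i = u*`.
-/

lemma sum_sum_ite_eq_of_eq_mul_ite {α β R : Type*} [Fintype α] [DecidableEq α] [Fintype β]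
    [NonAssocSemiring R] {g : β → α} {P : β → R} {J : α → β → R}
    (hJ : ∀ x u, J x u = P u * if x = g u then 1 else 0)
    (C : α → β → Prop) [∀ x u, Decidable (C x u)] :
    ∑ x, ∑ u, (if C x u then J x u else 0) = ∑ u, if C (g u) u then P u else 0 := by
  rw [sum_comm]
  refine sum_congr rfl fun u _ => ?_
  rw [Fintype.sum_eq_single (g u) fun x hx => by simp [hJ, hx]]
  simp [hJ]

section ProductDistribution

variable {ι : Type*} [Fintype ι] [DecidableEq ι] {U : ι → Type*}

lemma prod_piSplitAt_symm {M : Type*} [CommMonoid M] (p : ∀ k, U k → M) (i : ι) (v : U i)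
    (w : ∀ k : {k // k ≠ i}, U k) :
    ∏ k, p k ((Equiv.piSplitAt i U).symm (v, w) k) = p i v * ∏ k : {k // k ≠ i}, p k (w k) := by
  rw [Fintype.prod_eq_mul_prod_subtype_ne _ i]
  congr 1
  · simp
  · refine prod_congr rfl fun k _ => ?_
    simp [Equiv.piSplitAt_symm_apply, k.2]

variable [∀ k, Fintype (U k)]

lemma sum_eq_sum_sum_piSplitAt {M : Type*} [AddCommMonoid M] (i : ι) (F : (∀ k, U k) → M) :
    ∑ u, F u = ∑ v, ∑ w, F ((Equiv.piSplitAt i U).symm (v, w)) := by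
  rw [← (Equiv.piSplitAt i U).symm.sum_comp, Fintype.sum_prod_type]

lemma sum_prod_ite_apply_eq_and {R : Type*} [CommSemiring R] (p : ∀ k, U k → R) {i : ι}
    (hp1 : ∑ v, p i v = 1) (a : U i) (A : (∀ k, U k) → Prop) [DecidablePred A]
    (hA : ∀ u u', (∀ k ≠ i, u k = u' k) → (A u ↔ A u')) :
    (∑ u, if u i = a ∧ A u then ∏ k, p k (u k) else 0)
      = p i a * ∑ u, if A u then ∏ k, p k (u k) else 0 := by
  set B : (∀ k : {k // k ≠ i}, U k) → Prop := fun w => A ((Equiv.piSplitAt i U).symm (a, w))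
  have hB : ∀ v w, A ((Equiv.piSplitAt i U).symm (v, w)) ↔ B w := fun v w =>
    hA _ _ fun k hk => by simp [Equiv.piSplitAt_symm_apply, hk]
  have sum_mul_eq : ∀ G : (∀ k : {k // k ≠ i}, U k) → R, ∑ v, ∑ w, p i v * G w = ∑ w, G w :=
    fun G => by rw [← sum_mul_sum, hp1, one_mul]
  rw [sum_eq_sum_sum_piSplitAt i, sum_eq_sum_sum_piSplitAt i]
  simp only [prod_piSplitAt_symm, hB, ← mul_ite_zero, sum_mul_eq]
  rw [mul_sum, sum_comm]
  refine sum_congr rfl fun w _ => ?_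
  simp only [Equiv.piSplitAt_symm_apply, ↓reduceDIte, ite_and, mul_ite, mul_zero, sum_ite_eq',
    mem_univ, ↓reduceIte]

end ProductDistribution

section StructuralSolution

def structuralSolution {X U : Fin n → Type} (pa : Fin n → Finset (Fin n))
    (hpa : ∀ i, ∀ j ∈ pa i, j < i) (f : ∀ i, U i → (∀ j : pa i, X j) → X i)
    (u : ∀ i, U i) : ∀ i, X i
  | i => f i (u i) (fun j => structuralSolution pa hpa f u j)
termination_by i => (i : ℕ)
decreasing_by exact hpa i j j.2

variable {X U : Fin n → Type} (pa : Fin n → Finset (Fin n)) (hpa : ∀ i, ∀ j ∈ pa i, j < i)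
  (f : ∀ i, U i → (∀ j : pa i, X j) → X i)

lemma structuralSolution_apply (u : ∀ i, U i) (i : Fin n) :
    structuralSolution pa hpa f u i = f i (u i) (restr (pa i) (structuralSolution pa hpa f u)) := by
  rw [structuralSolution]
  rfl

lemma structuralSolution_congr {u u' : ∀ i, U i} {i : Fin n} (h : ∀ k ≤ i, u k = u' k) :
    structuralSolution pa hpa f u i = structuralSolution pa hpa f u' i := by
  induction i using WellFoundedLT.induction with
  | _ i ih =>
    rw [structuralSolution_apply, structuralSolution_apply, h i le_rfl]
    congr 1
    funext j
    exact ih j (hpa i j j.2) fun k hk => h k (hk.trans (hpa i j j.2).le)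

lemma forall_structural_eq_iff_eq_structuralSolution (u : ∀ i, U i) (x : ∀ i, X i) :
    (∀ i, f i (u i) (restr (pa i) x) = x i) ↔ x = structuralSolution pa hpa f u := by
  refine ⟨fun hx => funext fun i => ?_,
    fun hx i => hx ▸ (structuralSolution_apply pa hpa f u i).symm⟩
  induction i using WellFoundedLT.induction with
  | _ i ih =>
    rw [← hx i, structuralSolution_apply]
    congr 1
    funext j
    exact ih j (hpa i j j.2)

lemma restr_structuralSolution_congr {u u' : ∀ i, U i} {i : Fin n} (h : ∀ k ≠ i, u k = u' k) :
    restr (pa i) (structuralSolution pa hpa f u) = restr (pa i) (structuralSolution pa hpa f u') :=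
  funext fun j => structuralSolution_congr pa hpa f fun k hk =>
    h k (hk.trans_lt (hpa i j j.2)).ne

lemma prod_mul_ite_eq_structuralSolution {R : Type*} [CommMonoidWithZero R] (p : ∀ i, U i → R)
    (x : ∀ i, X i) (u : ∀ i, U i) :
    ∏ i, p i (u i) * (if f i (u i) (restr (pa i) x) = x i then (1 : R) else 0)
      = (∏ i, p i (u i)) * if x = structuralSolution pa hpa f u then 1 else 0 := by
  simp only [prod_mul_distrib, Fintype.prod_boole,
    forall_structural_eq_iff_eq_structuralSolution pa hpa f]

end StructuralSolution

theorem exogenous_indep_endogenous_parents_general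
    (X U : Fin n → Type)
    [∀ i, Fintype (X i)]
    [∀ i, Fintype (U i)]
    (pa : Fin n → Finset (Fin n)) (hpa : ∀ i, ∀ j ∈ pa i, j < i)
    (f : ∀ i, U i → (∀ j : pa i, X j) → X i)
    (p : ∀ i, U i → ℝ)
    (hp1 : ∀ i, ∑ u, p i u = 1)
    (J : (∀ i, X i) → (∀ i, U i) → ℝ)
    (hJ : ∀ x u, J x u = ∏ i, p i (u i) *
        (if f i (u i) (restr (pa i) x) = x i then (1 : ℝ) else 0))
    (Q : (∀ i, X i) → ℝ)
    (hQ : ∀ x, Q x = ∑ u : ∀ i, U i, J x u)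
    (i : Fin n) (ustar : U i) (π : ∀ j : pa i, X j) :
    (∑ x : ∀ i, X i, ∑ u : ∀ i, U i,
        if u i = ustar ∧ restr (pa i) x = π then J x u else 0)
      = p i ustar * marg Q (pa i) π := by
  have hJsol :
      ∀ x u, J x u = (∏ k, p k (u k)) * if x = structuralSolution pa hpa f u then 1 else 0 :=
    fun x u => (hJ x u).trans (prod_mul_ite_eq_structuralSolution pa hpa f p x u)
  have hmarg : marg Q (pa i) π = ∑ x, ∑ u, if restr (pa i) x = π then J x u else 0 := by
    simp only [marg, hQ, sum_ite_irrel, sum_const_zero]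
  rw [hmarg, sum_sum_ite_eq_of_eq_mul_ite hJsol fun x u => u i = ustar ∧ restr (pa i) x = π,
    sum_sum_ite_eq_of_eq_mul_ite hJsol fun x _ => restr (pa i) x = π]
  exact sum_prod_ite_apply_eq_and p (hp1 i) ustar
    (fun u => restr (pa i) (structuralSolution pa hpa f u) = π) fun u u' h => by
      rw [restr_structuralSolution_congr pa hpa f h]

/-- d-separation step: in a Markovian PSCM, each exogenous variable
`U_i` is independent of the endogenous parents of its child `X_i`:
the joint mass of `{U_i = u*, Pa(X_i) = π}` factorizes as `p_i(u*) · Q_{pa(i)}(π)`. -/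
theorem exogenous_indep_endogenous_parents
    (X U : Fin n → Type)
    [∀ i, Fintype (X i)] [∀ i, Nonempty (X i)]
    [∀ i, Fintype (U i)] [∀ i, Nonempty (U i)]
    (pa : Fin n → Finset (Fin n)) (hpa : ∀ i, ∀ j ∈ pa i, j < i)
    (f : ∀ i, U i → (∀ j : pa i, X j) → X i)
    (p : ∀ i, U i → ℝ)
    (hp0 : ∀ i u, 0 ≤ p i u) (hp1 : ∀ i, ∑ u, p i u = 1)
    (J : (∀ i, X i) → (∀ i, U i) → ℝ)
    (hJ : ∀ x u, J x u = ∏ i, p i (u i) *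
        (if f i (u i) (restr (pa i) x) = x i then (1 : ℝ) else 0))
    (Q : (∀ i, X i) → ℝ)
    (hQ : ∀ x, Q x = ∑ u : ∀ i, U i, J x u)
    (i : Fin n) (ustar : U i) (π : ∀ j : pa i, X j) :
    (∑ x : ∀ i, X i, ∑ u : ∀ i, U i,
        if u i = ustar ∧ restr (pa i) x = π then J x u else 0)
      = p i ustar * marg Q (pa i) π :=
  exogenous_indep_endogenous_parents_general X U pa hpa f p hp1 J hJ Q hQ i ustar π
end

section
/- For each e ∈ E and 1 ≤ k ≤ m_e set T_k^e := {i_1,…,i_{k−1}} ∪ pa(i_1) ∪ … ∪ pa(i_k). Let P̃ : (Π_i X_i) → ℝ be strictly positive with Σ_x P̃(x) = 1 and satisfying the c-component factorization P̃(x) = Π_{e∈E} Π_{k=1}^{m_e} P̃(x_{i_k} = x_{i_k} ∣ T_k^e = x↾T_k^e) for every x. Then for every tuple of exogenous distributions (q_e)_{e∈E}, the induced endogenous distribution Q equals P̃ if and only if for every e ∈ E and every assignment v ∈ Π_{j∈W_e} X_j one has Σ_{u ∈ U_e : f_{i_k}(u)(v↾pa(i_k)) = v_{i_k} for all k = 1,…,m_e}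 q_e(u) = Π_{k=1}^{m_e} P̃(x_{i_k} = v_{i_k} ∣ T_k^e = v↾T_k^e). (In quasi-Markovian models, the exogenous probability mass functions consistent with the empirical distribution are exactly the solutions of the linear constraints produced by Algorithm 2.) -/
open Finset
open scoped Classical

variable {n : ℕ}

/-- Restriction along an inclusion of index sets. -/
def restr2 {X : Fin n → Type} {S T : Finset (Fin n)} (h : S ⊆ T) (v : ∀ j : T, X j) :
    ∀ j : S, X j :=
  fun j => v ⟨j, h j.2⟩

/-- The endogenous children of the exogenous variable `e`. -/
noncomputable def childSet {E : Type} [Fintype E] (c : Fin n → E) (e : E) : Finset (Fin n) :=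
  univ.filter (fun i => c i = e)

/-- Enumeration `i_1 < … < i_{m_e}` of the children of `e` in increasing order. -/
noncomputable def ch {E : Type} [Fintype E] (c : Fin n → E) (e : E) :
    Fin (childSet c e).card → Fin n :=
  fun k => (childSet c e).orderEmbOfFin rfl k

lemma ch_mem_childSet {E : Type} [Fintype E] (c : Fin n → E) (e : E)
    (k : Fin (childSet c e).card) : ch c e k ∈ childSet c e :=
  Finset.orderEmbOfFin_mem _ rfl k

lemma c_ch {E : Type} [Fintype E] (c : Fin n → E) (e : E)
    (k : Fin (childSet c e).card) : c (ch c e k) = e := by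
  have h := ch_mem_childSet c e k
  simpa [childSet] using h

/-- Cast of a state of `U e` to a state of the exogenous parent of the `k`-th child of `e`. -/
noncomputable def uCast {E : Type} [Fintype E] (U : E → Type) (c : Fin n → E) (e : E)
    (k : Fin (childSet c e).card) (u : U e) : U (c (ch c e k)) :=
  cast (congrArg U (c_ch c e k).symm) u

/-- `W_e := {i_1,…,i_{m_e}} ∪ pa(i_1) ∪ … ∪ pa(i_{m_e})`. -/
noncomputable def Wset {E : Type} [Fintype E] (pa : Fin n → Finset (Fin n))
    (c : Fin n → E) (e : E) : Finset (Fin n) :=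
  childSet c e ∪ (childSet c e).biUnion pa

/-- `T_k^e := {i_1,…,i_{k−1}} ∪ pa(i_1) ∪ … ∪ pa(i_k)` (indices `k` are 0-based here). -/
noncomputable def Tset {E : Type} [Fintype E] (pa : Fin n → Finset (Fin n))
    (c : Fin n → E) (e : E) (k : Fin (childSet c e).card) : Finset (Fin n) :=
  ((univ.filter (fun l => l < k)).image (ch c e)) ∪
    ((univ.filter (fun l => l ≤ k)).biUnion (fun l => pa (ch c e l)))

lemma ch_mem_W {E : Type} [Fintype E] (pa : Fin n → Finset (Fin n)) (c : Fin n → E)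
    (e : E) (k : Fin (childSet c e).card) : ch c e k ∈ Wset pa c e :=
  Finset.mem_union_left _ (ch_mem_childSet c e k)

lemma pa_subset_W {E : Type} [Fintype E] (pa : Fin n → Finset (Fin n)) (c : Fin n → E)
    (e : E) (k : Fin (childSet c e).card) : pa (ch c e k) ⊆ Wset pa c e :=
  fun j hj => Finset.mem_union_right _
    (Finset.mem_biUnion.2 ⟨ch c e k, ch_mem_childSet c e k, hj⟩)

lemma T_subset_W {E : Type} [Fintype E] (pa : Fin n → Finset (Fin n)) (c : Fin n → E)
    (e : E) (k : Fin (childSet c e).card) : Tset pa c e k ⊆ Wset pa c e := by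
  intro j hj
  rcases Finset.mem_union.1 hj with h | h
  · rcases Finset.mem_image.1 h with ⟨l, _, rfl⟩
    exact ch_mem_W pa c e l
  · rcases Finset.mem_biUnion.1 h with ⟨l, _, hl⟩
    exact pa_subset_W pa c e l hl

/-- Full joint `J(x,u)` of a quasi-Markovian PSCM. -/
noncomputable def Jfun {E : Type} [Fintype E] {X : Fin n → Type} {U : E → Type}
    [∀ i, Fintype (X i)]
    (pa : Fin n → Finset (Fin n)) (c : Fin n → E)
    (f : ∀ i, U (c i) → (∀ j : pa i, X j) → X i)
    (q : ∀ e, U e → ℝ) (x : ∀ i, X i) (u : ∀ e, U e) : ℝ :=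
  (∏ e, q e (u e)) *
    ∏ i, (if f i (u (c i)) (restr (pa i) x) = x i then (1 : ℝ) else 0)

/-- Induced endogenous distribution `Q(x) := Σ_u J(x,u)`. -/
noncomputable def Qfun {E : Type} [Fintype E] {X : Fin n → Type} {U : E → Type}
    [∀ i, Fintype (X i)] [∀ e, Fintype (U e)]
    (pa : Fin n → Finset (Fin n)) (c : Fin n → E)
    (f : ∀ i, U (c i) → (∀ j : pa i, X j) → X i)
    (q : ∀ e, U e → ℝ) (x : ∀ i, X i) : ℝ :=
  ∑ u : ∀ e, U e, Jfun pa c f q x u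

/-! ### Auxiliary development -/

set_option linter.unusedSectionVars false

section AuxBasic
variable {X : Fin n → Type} [∀ i, Fintype (X i)] [∀ i, Nonempty (X i)]

/-- extension of a partial assignment by arbitrary values -/
noncomputable def extv (S : Finset (Fin n)) (v : ∀ j : S, X j) : ∀ i, X i :=
  fun i => if h : i ∈ S then v ⟨i, h⟩ else Classical.arbitrary _

lemma restr_extv (S : Finset (Fin n)) (v : ∀ j : S, X j) : restr S (extv S v) = v := by
  funext j
  simp [restr, extv, j.2]

lemma marg_pos (R : (∀ i, X i) → ℝ) (hpos : ∀ x, 0 < R x)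
    (S : Finset (Fin n)) (v : ∀ j : S, X j) : 0 < marg R S v := by
  apply Finset.sum_pos'
  · intro x _
    split <;> [exact (hpos x).le; rfl]
  · exact ⟨extv S v, Finset.mem_univ _, by simp [restr_extv, hpos]⟩

lemma cpr_pos (R : (∀ i, X i) → ℝ) (hpos : ∀ x, 0 < R x)
    (i : Fin n) (S : Finset (Fin n)) (hi : i ∉ S) (a : X i) (v : ∀ j : S, X j) :
    0 < cpr R i S a v := by
  apply div_pos _ (marg_pos R hpos S v)
  apply Finset.sum_pos'
  · intro x _
    split <;> [exact (hpos x).le; rfl]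
  · refine ⟨Function.update (extv S v) i a, Finset.mem_univ _, ?_⟩
    have h1 : Function.update (extv S v) i a i = a := Function.update_self i a _
    have h2 : restr S (Function.update (extv S v) i a) = v := by
      funext j
      have hj : (j : Fin n) ≠ i := fun h => hi (h ▸ j.2)
      show Function.update (extv S v) i a j = v j
      rw [Function.update_of_ne hj]
      exact congrFun (restr_extv S v) j
    simp [h1, h2, hpos]

lemma sum_cpr (R : (∀ i, X i) → ℝ) (i : Fin n) (S : Finset (Fin n))
    (v : ∀ j : S, X j) (hm : marg R S v ≠ 0) :
    ∑ a : X i, cpr R i S a v = 1 := by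
  unfold cpr
  rw [← Finset.sum_div]
  rw [Finset.sum_comm]
  have h : ∀ x : ∀ i, X i, (∑ a : X i, if x i = a ∧ restr S x = v then R x else 0)
      = if restr S x = v then R x else 0 := by
    intro x
    have h2 : ∀ a : X i, (if x i = a ∧ restr S x = v then R x else 0)
        = if x i = a then (if restr S x = v then R x else 0) else 0 := by
      intro a
      by_cases h1 : x i = a <;> by_cases h2 : restr S x = v <;> simp [h1, h2]
    rw [Finset.sum_congr rfl (fun a _ => h2 a)]
    simp
  rw [Finset.sum_congr rfl (fun x _ => h x)]
  exact div_self hm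

/-- marginal over the coordinates `< t` of a full tuple. -/
noncomputable def margT (R : (∀ i, X i) → ℝ) (t : ℕ) (x : ∀ i, X i) : ℝ :=
  ∑ y : ∀ i, X i, if (∀ j : Fin n, (j : ℕ) < t → y j = x j) then R y else 0

lemma margT_top (R : (∀ i, X i) → ℝ) (x : ∀ i, X i) : margT R n x = R x := by
  unfold margT
  have h : ∀ y : ∀ i, X i, ((∀ j : Fin n, (j : ℕ) < n → y j = x j) ↔ y = x) := by
    intro y
    constructor
    · intro h; funext j; exact h j j.isLt
    · intro h j _; rw [h]
  rw [Finset.sum_congr rfl (fun y _ => by rw [if_congr (h y) rfl rfl])]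
  simp

lemma margT_succ (R : (∀ i, X i) → ℝ) (t : Fin n) (x : ∀ i, X i) :
    margT R (t : ℕ) x = ∑ a : X t, margT R ((t : ℕ) + 1) (Function.update x t a) := by
  unfold margT
  rw [Finset.sum_comm]
  refine Finset.sum_congr rfl fun y _ => ?_
  have key : ∀ a : X t, ((∀ j : Fin n, (j : ℕ) < (t : ℕ) + 1 → y j = Function.update x t a j)
      ↔ ((∀ j : Fin n, (j : ℕ) < (t : ℕ) → y j = x j) ∧ y t = a)) := by
    intro a
    constructor
    · intro h
      constructor
      · intro j hj
        have hne : j ≠ t := fun he => absurd hj (by rw [he]; exact lt_irrefl _)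
        have := h j (Nat.lt_succ_of_lt hj)
        rwa [Function.update_of_ne hne] at this
      · have := h t (Nat.lt_succ_self _)
        rwa [Function.update_self] at this
    · rintro ⟨h1, h2⟩ j hj
      rcases Nat.lt_succ_iff_lt_or_eq.1 hj with hlt | heq
      · have hne : j ≠ t := fun he => absurd hlt (by rw [he]; exact lt_irrefl _)
        rw [Function.update_of_ne hne]
        exact h1 j hlt
      · have he : j = t := Fin.ext heq
        subst he
        rw [Function.update_self]
        exact h2
  rw [Finset.sum_congr rfl (fun a _ => by rw [if_congr (key a) rfl rfl])]
  by_cases hC : ∀ j : Fin n, (j : ℕ) < (t : ℕ) → y j = x j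
  · rw [if_pos hC]
    have h3 : ∀ a : X t, (if (∀ j : Fin n, (j : ℕ) < (t : ℕ) → y j = x j) ∧ y t = a
        then R y else 0) = if y t = a then R y else 0 := fun a => by
      by_cases h : y t = a
      · rw [if_pos ⟨hC, h⟩, if_pos h]
      · rw [if_neg (fun hh => h hh.2), if_neg h]
    rw [Finset.sum_congr rfl fun a _ => h3 a, Finset.sum_ite_eq univ (y t) fun _ => R y]
    simp
  · rw [if_neg hC, Finset.sum_congr rfl fun a _ => if_neg (fun hh => hC (And.left hh))]
    simp

end AuxBasic

section AuxCh
variable {E : Type} [Fintype E]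

lemma ch_injective (c : Fin n → E) (e : E) : Function.Injective (ch c e) :=
  fun a b h => ((childSet c e).orderEmbOfFin rfl).injective h

lemma ch_strictMono (c : Fin n → E) (e : E) : StrictMono (ch c e) :=
  ((childSet c e).orderEmbOfFin rfl).strictMono

lemma ch_surj (c : Fin n → E) (e : E) (i : Fin n) (hi : i ∈ childSet c e) :
    ∃ k, ch c e k = i := by
  have h := Finset.range_orderEmbOfFin (childSet c e) (rfl : (childSet c e).card = _)
  have : i ∈ Set.range ((childSet c e).orderEmbOfFin rfl) := by rw [h]; exact hi
  exact this

lemma Tset_lt (pa : Fin n → Finset (Fin n)) (hpa : ∀ i, ∀ j ∈ pa i, j < i)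
    (c : Fin n → E) (e : E) (k : Fin (childSet c e).card) :
    ∀ j ∈ Tset pa c e k, j < ch c e k := by
  intro j hj
  rcases Finset.mem_union.1 hj with h | h
  · rcases Finset.mem_image.1 h with ⟨l, hl, rfl⟩
    exact ch_strictMono c e (Finset.mem_filter.1 hl).2
  · rcases Finset.mem_biUnion.1 h with ⟨l, hl, hjl⟩
    exact lt_of_lt_of_le (hpa _ j hjl) ((ch_strictMono c e).monotone (Finset.mem_filter.1 hl).2)

lemma ch_notMem_T (pa : Fin n → Finset (Fin n)) (hpa : ∀ i, ∀ j ∈ pa i, j < i)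
    (c : Fin n → E) (e : E) (k : Fin (childSet c e).card) :
    ch c e k ∉ Tset pa c e k :=
  fun h => lt_irrefl _ (Tset_lt pa hpa c e k _ h)

lemma cast_apply_aux (U : E → Type) (u : ∀ e, U e) {a b : E} (h : a = b) :
    u a = cast (congrArg U h.symm) (u b) := by subst h; rfl

lemma uCast_apply (U : E → Type) (c : Fin n → E) (u : ∀ e, U e) (e : E)
    (k : Fin (childSet c e).card) : u (c (ch c e k)) = uCast U c e k (u e) :=
  cast_apply_aux U u (c_ch c e k)

lemma prod_childSet (c : Fin n → E) (e : E) (g : Fin n → ℝ) :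
    (∏ i ∈ childSet c e, g i) = ∏ k : Fin (childSet c e).card, g (ch c e k) := by
  rw [← Finset.prod_coe_sort (childSet c e) g,
      ← Equiv.prod_comp ((childSet c e).orderIsoOfFin rfl).toEquiv (fun x => g (x : Fin n))]
  rfl

end AuxCh

section AuxMain
variable {E : Type} [Fintype E] {X : Fin n → Type} {U : E → Type}
  [∀ i, Fintype (X i)] [∀ i, Nonempty (X i)] [∀ e, Fintype (U e)]
variable (pa : Fin n → Finset (Fin n)) (c : Fin n → E)

/-- partial c-component factor built from the structural equations -/
noncomputable def AA (f : ∀ i, U (c i) → (∀ j : pa i, X j) → X i) (q : ∀ e, U e → ℝ)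
    (e : E) (t : ℕ) (x : ∀ i, X i) : ℝ :=
  ∑ u : U e, q e u * ∏ k : Fin (childSet c e).card,
    if (ch c e k : ℕ) < t then
      (if f (ch c e k) (uCast U c e k u) (restr (pa (ch c e k)) x) = x (ch c e k)
        then (1 : ℝ) else 0)
    else 1

/-- partial c-component factor built from conditionals of `Ptilde` -/
noncomputable def BB (Ptilde : (∀ i, X i) → ℝ) (e : E) (t : ℕ) (x : ∀ i, X i) : ℝ :=
  ∏ k : Fin (childSet c e).card,
    if (ch c e k : ℕ) < t then
      cpr Ptilde (ch c e k) (Tset pa c e k) (x (ch c e k)) (restr (Tset pa c e k) x)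
    else 1

variable (hpa : ∀ i, ∀ j ∈ pa i, j < i)
variable (f : ∀ i, U (c i) → (∀ j : pa i, X j) → X i) (q : ∀ e, U e → ℝ)
variable (Ptilde : (∀ i, X i) → ℝ)

include hpa

lemma AA_invar (e : E) (t : ℕ) (x y : ∀ i, X i)
    (h : ∀ j : Fin n, j ∈ Wset pa c e → (j : ℕ) < t → x j = y j) :
    AA pa c f q e t x = AA pa c f q e t y := by
  refine Finset.sum_congr rfl fun u _ => ?_
  congr 1
  refine Finset.prod_congr rfl fun k _ => ?_
  by_cases hk : (ch c e k : ℕ) < t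
  · rw [if_pos hk, if_pos hk]
    have hx : x (ch c e k) = y (ch c e k) := h _ (ch_mem_W pa c e k) hk
    have hr : restr (pa (ch c e k)) x = restr (pa (ch c e k)) y := by
      funext j
      exact h j (pa_subset_W pa c e k j.2)
        (lt_trans (show ((j : Fin n) : ℕ) < (ch c e k : ℕ) from hpa _ j j.2) hk)
    rw [hr, hx]
  · rw [if_neg hk, if_neg hk]

lemma BB_invar (e : E) (t : ℕ) (x y : ∀ i, X i)
    (h : ∀ j : Fin n, j ∈ Wset pa c e → (j : ℕ) < t → x j = y j) :
    BB pa c Ptilde e t x = BB pa c Ptilde e t y := by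
  refine Finset.prod_congr rfl fun k _ => ?_
  by_cases hk : (ch c e k : ℕ) < t
  · rw [if_pos hk, if_pos hk]
    have hx : x (ch c e k) = y (ch c e k) := h _ (ch_mem_W pa c e k) hk
    have hr : restr (Tset pa c e k) x = restr (Tset pa c e k) y := by
      funext j
      exact h j (T_subset_W pa c e k j.2)
        (lt_trans (show ((j : Fin n) : ℕ) < (ch c e k : ℕ) from Tset_lt pa hpa c e k j j.2) hk)
    rw [hr, hx]
  · rw [if_neg hk, if_neg hk]

lemma BB_pos (hpos : ∀ x, 0 < Ptilde x) (e : E) (t : ℕ) (x : ∀ i, X i) :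
    0 < BB pa c Ptilde e t x := by
  refine Finset.prod_pos fun k _ => ?_
  by_cases hk : (ch c e k : ℕ) < t
  · rw [if_pos hk]
    exact cpr_pos Ptilde hpos _ _ (ch_notMem_T pa hpa c e k) _ _
  · rw [if_neg hk]
    exact one_pos

lemma AA_zero (hq1 : ∀ e, ∑ u, q e u = 1) (e : E) (x : ∀ i, X i) :
    AA pa c f q e 0 x = 1 := by
  have h : ∀ u : U e, q e u * ∏ k : Fin (childSet c e).card,
      (if (ch c e k : ℕ) < 0 then
        (if f (ch c e k) (uCast U c e k u) (restr (pa (ch c e k)) x) = x (ch c e k)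
          then (1 : ℝ) else 0) else 1) = q e u := by
    intro u
    rw [Finset.prod_congr rfl fun k _ => if_neg (Nat.not_lt_zero _), Finset.prod_const_one,
      mul_one]
  rw [AA, Finset.sum_congr rfl fun u _ => h u]
  exact hq1 e

lemma BB_zero (e : E) (x : ∀ i, X i) : BB pa c Ptilde e 0 x = 1 := by
  rw [BB, Finset.prod_congr rfl fun k _ => if_neg (Nat.not_lt_zero _), Finset.prod_const_one]

lemma AA_step_ne (e : E) (t' : Fin n) (he : c t' ≠ e) (x : ∀ i, X i) (a : X t') :
    AA pa c f q e ((t' : ℕ) + 1) (Function.update x t' a) = AA pa c f q e (t' : ℕ) x := by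
  refine Finset.sum_congr rfl fun u _ => ?_
  congr 1
  refine Finset.prod_congr rfl fun k _ => ?_
  have hne : ch c e k ≠ t' := fun h => he (h ▸ c_ch c e k)
  have hvne : ((ch c e k : Fin n) : ℕ) ≠ (t' : ℕ) := fun h => hne (Fin.ext h)
  by_cases hk : (ch c e k : ℕ) < (t' : ℕ)
  · rw [if_pos (Nat.lt_succ_of_lt hk), if_pos hk]
    have h1 : Function.update x t' a (ch c e k) = x (ch c e k) :=
      Function.update_of_ne hne _ _
    have h2 : restr (pa (ch c e k)) (Function.update x t' a) = restr (pa (ch c e k)) x := by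
      funext j
      have hjne : (j : Fin n) ≠ t' := by
        intro h
        have hjlt : ((j : Fin n) : ℕ) < (t' : ℕ) :=
          lt_trans (show ((j : Fin n) : ℕ) < (ch c e k : ℕ) from hpa _ j j.2) hk
        rw [h] at hjlt
        exact lt_irrefl _ hjlt
      show Function.update x t' a j = x j
      rw [Function.update_of_ne hjne]
    rw [h1, h2]
  · rw [if_neg (fun h => hk (lt_of_le_of_ne (Nat.lt_succ_iff.1 h) hvne)), if_neg hk]

lemma BB_step_ne (e : E) (t' : Fin n) (he : c t' ≠ e) (x : ∀ i, X i) (a : X t') :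
    BB pa c Ptilde e ((t' : ℕ) + 1) (Function.update x t' a) = BB pa c Ptilde e (t' : ℕ) x := by
  refine Finset.prod_congr rfl fun k _ => ?_
  have hne : ch c e k ≠ t' := fun h => he (h ▸ c_ch c e k)
  have hvne : ((ch c e k : Fin n) : ℕ) ≠ (t' : ℕ) := fun h => hne (Fin.ext h)
  by_cases hk : (ch c e k : ℕ) < (t' : ℕ)
  · rw [if_pos (Nat.lt_succ_of_lt hk), if_pos hk]
    have h1 : Function.update x t' a (ch c e k) = x (ch c e k) :=
      Function.update_of_ne hne _ _
    have h2 : restr (Tset pa c e k) (Function.update x t' a) = restr (Tset pa c e k) x := by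
      funext j
      have hjne : (j : Fin n) ≠ t' := by
        intro h
        have hjlt : ((j : Fin n) : ℕ) < (t' : ℕ) :=
          lt_trans (show ((j : Fin n) : ℕ) < (ch c e k : ℕ) from Tset_lt pa hpa c e k j j.2) hk
        rw [h] at hjlt
        exact lt_irrefl _ hjlt
      show Function.update x t' a j = x j
      rw [Function.update_of_ne hjne]
    rw [h1, h2]
  · rw [if_neg (fun h => hk (lt_of_le_of_ne (Nat.lt_succ_iff.1 h) hvne)), if_neg hk]

lemma AA_step_eq (e : E) (k0 : Fin (childSet c e).card) (i : Fin n) (hi : ch c e k0 = i)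
    (x : ∀ i, X i) :
    (∑ a : X i, AA pa c f q e ((i : ℕ) + 1) (Function.update x i a))
    = AA pa c f q e (i : ℕ) x := by
  subst hi
  unfold AA
  rw [Finset.sum_comm]
  refine Finset.sum_congr rfl fun u _ => ?_
  rw [← Finset.mul_sum]
  congr 1
  have hkfac : ∀ (a : X (ch c e k0)) (k : Fin (childSet c e).card), k ≠ k0 →
      (if (ch c e k : ℕ) < (ch c e k0 : ℕ) + 1 then
        (if f (ch c e k) (uCast U c e k u)
            (restr (pa (ch c e k)) (Function.update x (ch c e k0) a))
          = Function.update x (ch c e k0) a (ch c e k) then (1:ℝ) else 0) else 1)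
      = (if (ch c e k : ℕ) < (ch c e k0 : ℕ) then
        (if f (ch c e k) (uCast U c e k u) (restr (pa (ch c e k)) x)
          = x (ch c e k) then (1:ℝ) else 0) else 1) := by
    intro a k hk0
    have hne : ch c e k ≠ ch c e k0 := fun h => hk0 (ch_injective c e h)
    have hvne : ((ch c e k : Fin n) : ℕ) ≠ (ch c e k0 : ℕ) := fun h => hne (Fin.ext h)
    by_cases hk : (ch c e k : ℕ) < (ch c e k0 : ℕ)
    · rw [if_pos (Nat.lt_succ_of_lt hk), if_pos hk]
      have h1 : Function.update x (ch c e k0) a (ch c e k) = x (ch c e k) :=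
        Function.update_of_ne hne _ _
      have h2 : restr (pa (ch c e k)) (Function.update x (ch c e k0) a)
          = restr (pa (ch c e k)) x := by
        funext j
        have hjne : (j : Fin n) ≠ ch c e k0 := by
          intro h
          have hjlt : ((j : Fin n) : ℕ) < (ch c e k0 : ℕ) :=
            lt_trans (show ((j : Fin n) : ℕ) < (ch c e k : ℕ) from hpa _ j j.2) hk
          rw [h] at hjlt
          exact lt_irrefl _ hjlt
        show Function.update x (ch c e k0) a j = x j
        rw [Function.update_of_ne hjne]
      rw [h1, h2]
    · rw [if_neg (fun h => hk (lt_of_le_of_ne (Nat.lt_succ_iff.1 h) hvne)), if_neg hk]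
  have hk0fac : ∀ a : X (ch c e k0),
      (if (ch c e k0 : ℕ) < (ch c e k0 : ℕ) + 1 then
        (if f (ch c e k0) (uCast U c e k0 u)
            (restr (pa (ch c e k0)) (Function.update x (ch c e k0) a))
          = Function.update x (ch c e k0) a (ch c e k0) then (1:ℝ) else 0) else 1)
      = (if f (ch c e k0) (uCast U c e k0 u) (restr (pa (ch c e k0)) x) = a
          then (1:ℝ) else 0) := by
    intro a
    rw [if_pos (Nat.lt_succ_self _)]
    have h1 : Function.update x (ch c e k0) a (ch c e k0) = a := Function.update_self _ _ _
    have h2 : restr (pa (ch c e k0)) (Function.update x (ch c e k0) a)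
        = restr (pa (ch c e k0)) x := by
      funext j
      have hjne : (j : Fin n) ≠ ch c e k0 := by
        intro h
        have hjlt := hpa _ j j.2
        rw [h] at hjlt
        exact lt_irrefl _ hjlt
      show Function.update x (ch c e k0) a j = x j
      rw [Function.update_of_ne hjne]
    rw [h1, h2]
  calc (∑ a : X (ch c e k0), ∏ k : Fin (childSet c e).card,
        (if (ch c e k : ℕ) < (ch c e k0 : ℕ) + 1 then
          (if f (ch c e k) (uCast U c e k u)
              (restr (pa (ch c e k)) (Function.update x (ch c e k0) a))
            = Function.update x (ch c e k0) a (ch c e k) then (1:ℝ) else 0) else 1))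
      = ∑ a : X (ch c e k0),
          (if f (ch c e k0) (uCast U c e k0 u) (restr (pa (ch c e k0)) x) = a
            then (1:ℝ) else 0) *
          ∏ k ∈ Finset.univ.erase k0,
            (if (ch c e k : ℕ) < (ch c e k0 : ℕ) then
              (if f (ch c e k) (uCast U c e k u) (restr (pa (ch c e k)) x)
                = x (ch c e k) then (1:ℝ) else 0) else 1) := by
        refine Finset.sum_congr rfl fun a _ => ?_
        rw [← Finset.mul_prod_erase Finset.univ _ (Finset.mem_univ k0), hk0fac a,
          Finset.prod_congr rfl fun k hk => hkfac a k (Finset.mem_erase.1 hk).1]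
    _ = (∑ a : X (ch c e k0),
          (if f (ch c e k0) (uCast U c e k0 u) (restr (pa (ch c e k0)) x) = a
            then (1:ℝ) else 0)) *
          ∏ k ∈ Finset.univ.erase k0,
            (if (ch c e k : ℕ) < (ch c e k0 : ℕ) then
              (if f (ch c e k) (uCast U c e k u) (restr (pa (ch c e k)) x)
                = x (ch c e k) then (1:ℝ) else 0) else 1) := by
        rw [Finset.sum_mul]
    _ = ∏ k : Fin (childSet c e).card,
          (if (ch c e k : ℕ) < (ch c e k0 : ℕ) then
            (if f (ch c e k) (uCast U c e k u) (restr (pa (ch c e k)) x)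
              = x (ch c e k) then (1:ℝ) else 0) else 1) := by
        rw [Finset.sum_ite_eq Finset.univ
          (f (ch c e k0) (uCast U c e k0 u) (restr (pa (ch c e k0)) x)) (fun _ => (1:ℝ)),
          if_pos (Finset.mem_univ _), one_mul,
          ← Finset.mul_prod_erase Finset.univ _ (Finset.mem_univ k0),
          if_neg (lt_irrefl _), one_mul]

lemma BB_step_eq (hpos : ∀ x, 0 < Ptilde x) (e : E) (k0 : Fin (childSet c e).card)
    (i : Fin n) (hi : ch c e k0 = i) (x : ∀ i, X i) :
    (∑ a : X i, BB pa c Ptilde e ((i : ℕ) + 1) (Function.update x i a))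
    = BB pa c Ptilde e (i : ℕ) x := by
  subst hi
  unfold BB
  have hkfac : ∀ (a : X (ch c e k0)) (k : Fin (childSet c e).card), k ≠ k0 →
      (if (ch c e k : ℕ) < (ch c e k0 : ℕ) + 1 then
        cpr Ptilde (ch c e k) (Tset pa c e k)
          (Function.update x (ch c e k0) a (ch c e k))
          (restr (Tset pa c e k) (Function.update x (ch c e k0) a)) else 1)
      = (if (ch c e k : ℕ) < (ch c e k0 : ℕ) then
        cpr Ptilde (ch c e k) (Tset pa c e k) (x (ch c e k))
          (restr (Tset pa c e k) x) else 1) := by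
    intro a k hk0
    have hne : ch c e k ≠ ch c e k0 := fun h => hk0 (ch_injective c e h)
    have hvne : ((ch c e k : Fin n) : ℕ) ≠ (ch c e k0 : ℕ) := fun h => hne (Fin.ext h)
    by_cases hk : (ch c e k : ℕ) < (ch c e k0 : ℕ)
    · rw [if_pos (Nat.lt_succ_of_lt hk), if_pos hk]
      have h1 : Function.update x (ch c e k0) a (ch c e k) = x (ch c e k) :=
        Function.update_of_ne hne _ _
      have h2 : restr (Tset pa c e k) (Function.update x (ch c e k0) a)
          = restr (Tset pa c e k) x := by
        funext j
        have hjne : (j : Fin n) ≠ ch c e k0 := by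
          intro h
          have hjlt : ((j : Fin n) : ℕ) < (ch c e k0 : ℕ) :=
            lt_trans (show ((j : Fin n) : ℕ) < (ch c e k : ℕ) from Tset_lt pa hpa c e k j j.2) hk
          rw [h] at hjlt
          exact lt_irrefl _ hjlt
        show Function.update x (ch c e k0) a j = x j
        rw [Function.update_of_ne hjne]
      rw [h1, h2]
    · rw [if_neg (fun h => hk (lt_of_le_of_ne (Nat.lt_succ_iff.1 h) hvne)), if_neg hk]
  have hk0fac : ∀ a : X (ch c e k0),
      (if (ch c e k0 : ℕ) < (ch c e k0 : ℕ) + 1 then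
        cpr Ptilde (ch c e k0) (Tset pa c e k0)
          (Function.update x (ch c e k0) a (ch c e k0))
          (restr (Tset pa c e k0) (Function.update x (ch c e k0) a)) else 1)
      = cpr Ptilde (ch c e k0) (Tset pa c e k0) a (restr (Tset pa c e k0) x) := by
    intro a
    rw [if_pos (Nat.lt_succ_self _)]
    have h1 : Function.update x (ch c e k0) a (ch c e k0) = a := Function.update_self _ _ _
    have h2 : restr (Tset pa c e k0) (Function.update x (ch c e k0) a)
        = restr (Tset pa c e k0) x := by
      funext j
      have hjne : (j : Fin n) ≠ ch c e k0 := by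
        intro h
        have hjlt := Tset_lt pa hpa c e k0 j j.2
        rw [h] at hjlt
        exact lt_irrefl _ hjlt
      show Function.update x (ch c e k0) a j = x j
      rw [Function.update_of_ne hjne]
    rw [h1, h2]
  calc (∑ a : X (ch c e k0), ∏ k : Fin (childSet c e).card,
        (if (ch c e k : ℕ) < (ch c e k0 : ℕ) + 1 then
          cpr Ptilde (ch c e k) (Tset pa c e k)
            (Function.update x (ch c e k0) a (ch c e k))
            (restr (Tset pa c e k) (Function.update x (ch c e k0) a)) else 1))
      = ∑ a : X (ch c e k0),
          cpr Ptilde (ch c e k0) (Tset pa c e k0) a (restr (Tset pa c e k0) x) *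
          ∏ k ∈ Finset.univ.erase k0,
            (if (ch c e k : ℕ) < (ch c e k0 : ℕ) then
              cpr Ptilde (ch c e k) (Tset pa c e k) (x (ch c e k))
                (restr (Tset pa c e k) x) else 1) := by
        refine Finset.sum_congr rfl fun a _ => ?_
        rw [← Finset.mul_prod_erase Finset.univ _ (Finset.mem_univ k0), hk0fac a,
          Finset.prod_congr rfl fun k hk => hkfac a k (Finset.mem_erase.1 hk).1]
    _ = (∑ a : X (ch c e k0),
          cpr Ptilde (ch c e k0) (Tset pa c e k0) a (restr (Tset pa c e k0) x)) *
          ∏ k ∈ Finset.univ.erase k0,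
            (if (ch c e k : ℕ) < (ch c e k0 : ℕ) then
              cpr Ptilde (ch c e k) (Tset pa c e k) (x (ch c e k))
                (restr (Tset pa c e k) x) else 1) := by
        rw [Finset.sum_mul]
    _ = ∏ k : Fin (childSet c e).card,
          (if (ch c e k : ℕ) < (ch c e k0 : ℕ) then
            cpr Ptilde (ch c e k) (Tset pa c e k) (x (ch c e k))
              (restr (Tset pa c e k) x) else 1) := by
        rw [sum_cpr Ptilde (ch c e k0) (Tset pa c e k0) (restr (Tset pa c e k0) x)
            (marg_pos Ptilde hpos _ _).ne', one_mul,
          ← Finset.mul_prod_erase Finset.univ _ (Finset.mem_univ k0),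
          if_neg (lt_irrefl _), one_mul]

lemma Qfun_eq (x : ∀ i, X i) : Qfun pa c f q x = ∏ e, AA pa c f q e n x := by
  have h1 : ∀ u : ∀ e, U e,
      (∏ i, (if f i (u (c i)) (restr (pa i) x) = x i then (1:ℝ) else 0))
      = ∏ e, ∏ k : Fin (childSet c e).card,
          (if f (ch c e k) (uCast U c e k (u e)) (restr (pa (ch c e k)) x) = x (ch c e k)
            then (1:ℝ) else 0) := by
    intro u
    rw [← Finset.prod_fiberwise Finset.univ c
      (fun i => if f i (u (c i)) (restr (pa i) x) = x i then (1:ℝ) else 0)]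
    refine Finset.prod_congr rfl fun e _ => ?_
    rw [show Finset.univ.filter (fun i => c i = e) = childSet c e from rfl,
      prod_childSet c e (fun i => if f i (u (c i)) (restr (pa i) x) = x i then (1:ℝ) else 0)]
    refine Finset.prod_congr rfl fun k _ => ?_
    rw [show u (c (ch c e k)) = uCast U c e k (u e) from uCast_apply U c u e k]
  have h2 : Qfun pa c f q x = ∑ u : ∀ e, U e, ∏ e,
      (q e (u e) * ∏ k : Fin (childSet c e).card,
        (if f (ch c e k) (uCast U c e k (u e)) (restr (pa (ch c e k)) x) = x (ch c e k)
          then (1:ℝ) else 0)) := by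
    refine Finset.sum_congr rfl fun u _ => ?_
    rw [Jfun, h1 u, ← Finset.prod_mul_distrib]
  rw [h2]
  have h3 : (∑ u : ∀ e, U e, ∏ e,
      (q e (u e) * ∏ k : Fin (childSet c e).card,
        (if f (ch c e k) (uCast U c e k (u e)) (restr (pa (ch c e k)) x) = x (ch c e k)
          then (1:ℝ) else 0)))
      = ∏ e, ∑ w : U e,
        (q e w * ∏ k : Fin (childSet c e).card,
          (if f (ch c e k) (uCast U c e k w) (restr (pa (ch c e k)) x) = x (ch c e k)
            then (1:ℝ) else 0)) := by
    rw [Finset.prod_univ_sum, ← Fintype.piFinset_univ]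
  rw [h3]
  refine Finset.prod_congr rfl fun e _ => ?_
  rw [AA]
  refine Finset.sum_congr rfl fun w _ => ?_
  congr 1
  exact Finset.prod_congr rfl fun k _ => (if_pos (ch c e k).isLt).symm

lemma Ptilde_eq (hfact : ∀ x, Ptilde x = ∏ e, ∏ k : Fin (childSet c e).card,
      cpr Ptilde (ch c e k) (Tset pa c e k) (x (ch c e k)) (restr (Tset pa c e k) x))
    (x : ∀ i, X i) : Ptilde x = ∏ e, BB pa c Ptilde e n x := by
  rw [hfact x]
  refine Finset.prod_congr rfl fun e _ => ?_
  rw [BB]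
  exact Finset.prod_congr rfl fun k _ => (if_pos (ch c e k).isLt).symm

omit hpa in
lemma margT_prod (R : (∀ i, X i) → ℝ) (G : E → ℕ → (∀ i, X i) → ℝ)
    (htop : ∀ x, R x = ∏ e, G e n x)
    (hne : ∀ (t' : Fin n) (e : E), c t' ≠ e → ∀ (x : ∀ i, X i) (a : X t'),
      G e ((t' : ℕ) + 1) (Function.update x t' a) = G e (t' : ℕ) x)
    (heq : ∀ (t' : Fin n) (x : ∀ i, X i),
      (∑ a : X t', G (c t') ((t' : ℕ) + 1) (Function.update x t' a)) = G (c t') (t' : ℕ) x) :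
    ∀ d t, t + d = n → ∀ x, margT R t x = ∏ e, G e t x := by
  intro d
  induction d with
  | zero =>
    intro t ht x
    simp only [Nat.add_zero] at ht
    subst ht
    rw [margT_top, htop]
  | succ d ih =>
    intro t ht x
    have htn : t < n := by omega
    set t' : Fin n := ⟨t, htn⟩ with ht'
    have hc : margT R t x = ∑ a : X t', margT R (t + 1) (Function.update x t' a) :=
      margT_succ R t' x
    rw [hc]
    have hstep : ∀ a : X t',
        margT R (t + 1) (Function.update x t' a) = ∏ e, G e (t + 1) (Function.update x t' a) :=
      fun a => ih (t + 1) (by omega) _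
    rw [Finset.sum_congr rfl fun a _ => hstep a]
    have hsplit : ∀ a : X t', (∏ e, G e (t + 1) (Function.update x t' a))
        = G (c t') (t + 1) (Function.update x t' a) *
          ∏ e ∈ Finset.univ.erase (c t'), G e t x := by
      intro a
      rw [← Finset.mul_prod_erase Finset.univ _ (Finset.mem_univ (c t'))]
      congr 1
      exact Finset.prod_congr rfl fun e he =>
        hne t' e (Ne.symm (Finset.mem_erase.1 he).1) x a
    rw [Finset.sum_congr rfl fun a _ => hsplit a, ← Finset.sum_mul, heq t' x]
    exact Finset.mul_prod_erase Finset.univ (fun e => G e t x) (Finset.mem_univ (c t'))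

omit hpa in
lemma mem_childSet_self (i : Fin n) : i ∈ childSet c (c i) := by
  simp [childSet]

lemma AB_eq (hpos : ∀ x, 0 < Ptilde x) (hq1 : ∀ e, ∑ u, q e u = 1)
    (hQ : ∀ x, Qfun pa c f q x = Ptilde x)
    (hfact : ∀ x, Ptilde x = ∏ e, ∏ k : Fin (childSet c e).card,
      cpr Ptilde (ch c e k) (Tset pa c e k) (x (ch c e k)) (restr (Tset pa c e k) x)) :
    ∀ t, t ≤ n → ∀ (e : E) (x : ∀ i, X i),
      AA pa c f q e t x = BB pa c Ptilde e t x := by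
  have hmargA : ∀ t ≤ n, ∀ x : ∀ i, X i,
      margT (Qfun pa c f q) t x = ∏ e, AA pa c f q e t x := by
    intro t ht x
    refine margT_prod c (Qfun pa c f q) (fun e t x => AA pa c f q e t x)
      (fun x => Qfun_eq pa c hpa f q x)
      (fun t' e he x a => AA_step_ne pa c hpa f q e t' he x a)
      (fun t' x => AA_step_eq pa c hpa f q (c t')
        (Classical.choose (ch_surj c (c t') t' (mem_childSet_self c t'))) t'
        (Classical.choose_spec (ch_surj c (c t') t' (mem_childSet_self c t'))) x)
      (n - t) t (by omega) x
  have hmargB : ∀ t ≤ n, ∀ x : ∀ i, X i,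
      margT Ptilde t x = ∏ e, BB pa c Ptilde e t x := by
    intro t ht x
    refine margT_prod c Ptilde (fun e t x => BB pa c Ptilde e t x)
      (fun x => Ptilde_eq pa c hpa Ptilde hfact x)
      (fun t' e he x a => BB_step_ne pa c hpa Ptilde e t' he x a)
      (fun t' x => BB_step_eq pa c hpa Ptilde hpos (c t')
        (Classical.choose (ch_surj c (c t') t' (mem_childSet_self c t'))) t'
        (Classical.choose_spec (ch_surj c (c t') t' (mem_childSet_self c t'))) x)
      (n - t) t (by omega) x
  have hprod : ∀ t ≤ n, ∀ x : ∀ i, X i,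
      (∏ e, AA pa c f q e t x) = ∏ e, BB pa c Ptilde e t x := by
    intro t ht x
    rw [← hmargA t ht x, ← hmargB t ht x]
    exact Finset.sum_congr rfl fun y _ => by rw [hQ y]
  intro t
  induction t with
  | zero =>
    intro _ e x
    rw [AA_zero pa c hpa f q hq1 e x, BB_zero pa c hpa Ptilde e x]
  | succ t ih =>
    intro ht e x
    have htn : t < n := by omega
    set t' : Fin n := ⟨t, htn⟩ with ht'
    have hneq : ∀ (e : E), c t' ≠ e → ∀ x : ∀ i, X i,
        AA pa c f q e (t + 1) x = BB pa c Ptilde e (t + 1) x := by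
      intro e he x
      have hx : Function.update x t' (x t') = x := Function.update_eq_self t' x
      calc AA pa c f q e (t + 1) x
          = AA pa c f q e (t + 1) (Function.update x t' (x t')) := by rw [hx]
        _ = AA pa c f q e t x := AA_step_ne pa c hpa f q e t' he x (x t')
        _ = BB pa c Ptilde e t x := ih (by omega) e x
        _ = BB pa c Ptilde e (t + 1) x := by
            rw [← BB_step_ne pa c hpa Ptilde e t' he x (x t'), hx]
    by_cases he : c t' = e
    · have h := hprod (t + 1) ht x
      rw [← Finset.mul_prod_erase Finset.univ (fun e => AA pa c f q e (t + 1) x)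
          (Finset.mem_univ e),
        ← Finset.mul_prod_erase Finset.univ (fun e => BB pa c Ptilde e (t + 1) x)
          (Finset.mem_univ e)] at h
      have hrest : (∏ e' ∈ Finset.univ.erase e, AA pa c f q e' (t + 1) x)
          = ∏ e' ∈ Finset.univ.erase e, BB pa c Ptilde e' (t + 1) x := by
        refine Finset.prod_congr rfl fun e' he' => ?_
        exact hneq e' (fun hc => (Finset.mem_erase.1 he').1 (hc ▸ he.symm ▸ rfl)) x
      rw [hrest] at h
      have hbpos : (∏ e' ∈ Finset.univ.erase e, BB pa c Ptilde e' (t + 1) x) ≠ 0 :=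
        (Finset.prod_pos fun e' _ => BB_pos pa c hpa Ptilde hpos e' (t + 1) x).ne'
      exact mul_right_cancel₀ hbpos h
    · exact hneq e he x

omit hpa in
lemma prodBoole {κ : Type} [Fintype κ] (p : κ → Prop) :
    (∏ k, if p k then (1:ℝ) else 0) = if ∀ k, p k then 1 else 0 := by
  by_cases h : ∀ k, p k
  · rw [if_pos h]
    exact Finset.prod_eq_one fun k _ => if_pos (h k)
  · rw [if_neg h]
    obtain ⟨k, hk⟩ := not_forall.1 h
    exact Finset.prod_eq_zero (Finset.mem_univ k) (if_neg hk)

lemma bridgeA (e : E) (x : ∀ i, X i) :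
    (∑ u : U e,
      if (∀ k : Fin (childSet c e).card,
          f (ch c e k) (uCast U c e k u)
            (restr2 (pa_subset_W pa c e k) (restr (Wset pa c e) x))
          = (restr (Wset pa c e) x) ⟨ch c e k, ch_mem_W pa c e k⟩)
      then q e u else 0)
    = AA pa c f q e n x := by
  unfold AA
  refine Finset.sum_congr rfl fun u _ => ?_
  have h1 : (∏ k : Fin (childSet c e).card,
      (if (ch c e k : ℕ) < n then
        (if f (ch c e k) (uCast U c e k u) (restr (pa (ch c e k)) x) = x (ch c e k)
          then (1:ℝ) else 0) else 1))
      = ∏ k : Fin (childSet c e).card,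
        (if f (ch c e k) (uCast U c e k u) (restr (pa (ch c e k)) x) = x (ch c e k)
          then (1:ℝ) else 0) :=
    Finset.prod_congr rfl fun k _ => if_pos (ch c e k).isLt
  rw [h1, prodBoole, mul_ite, mul_one, mul_zero]
  have hiff : (∀ k : Fin (childSet c e).card,
      f (ch c e k) (uCast U c e k u)
        (restr2 (pa_subset_W pa c e k) (restr (Wset pa c e) x))
      = (restr (Wset pa c e) x) ⟨ch c e k, ch_mem_W pa c e k⟩)
      ↔ (∀ k : Fin (childSet c e).card,
        f (ch c e k) (uCast U c e k u) (restr (pa (ch c e k)) x) = x (ch c e k)) := by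
    constructor
    · intro h k
      exact h k
    · intro h k
      exact h k
  by_cases h : ∀ k : Fin (childSet c e).card,
      f (ch c e k) (uCast U c e k u) (restr (pa (ch c e k)) x) = x (ch c e k)
  · rw [if_pos h, if_pos (hiff.2 h)]
  · rw [if_neg h, if_neg (fun hh => h (hiff.1 hh))]

lemma bridgeB (e : E) (x : ∀ i, X i) :
    (∏ k : Fin (childSet c e).card,
      cpr Ptilde (ch c e k) (Tset pa c e k)
        ((restr (Wset pa c e) x) ⟨ch c e k, ch_mem_W pa c e k⟩)
        (restr2 (T_subset_W pa c e k) (restr (Wset pa c e) x)))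
    = BB pa c Ptilde e n x := by
  unfold BB
  refine Finset.prod_congr rfl fun k _ => ?_
  rw [if_pos (ch c e k).isLt]
  rfl

end AuxMain


/-- Theorem 2, quasi-Markovian identification: given a strictly positive
empirical PMF `Ptilde` satisfying the c-component factorization, a tuple of exogenous
distributions induces `Ptilde` iff it satisfies the linear constraints of Algorithm 2. -/
theorem quasi_markovian_identification
    {E : Type} [Fintype E] (X : Fin n → Type) (U : E → Type)
    [∀ i, Fintype (X i)] [∀ i, Nonempty (X i)]
    [∀ e, Fintype (U e)] [∀ e, Nonempty (U e)]
    (pa : Fin n → Finset (Fin n)) (hpa : ∀ i, ∀ j ∈ pa i, j < i)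
    (c : Fin n → E)
    (f : ∀ i, U (c i) → (∀ j : pa i, X j) → X i)
    (Ptilde : (∀ i, X i) → ℝ)
    (hpos : ∀ x, 0 < Ptilde x) (hsum : ∑ x, Ptilde x = 1)
    (hfact : ∀ x, Ptilde x = ∏ e, ∏ k : Fin (childSet c e).card,
        cpr Ptilde (ch c e k) (Tset pa c e k) (x (ch c e k)) (restr (Tset pa c e k) x)) :
    ∀ q : ∀ e, U e → ℝ, (∀ e u, 0 ≤ q e u) → (∀ e, ∑ u, q e u = 1) →
      ((∀ x, Qfun pa c f q x = Ptilde x) ↔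
        (∀ (e : E) (v : ∀ j : Wset pa c e, X j),
          (∑ u : U e,
            if (∀ k : Fin (childSet c e).card,
                f (ch c e k) (uCast U c e k u) (restr2 (pa_subset_W pa c e k) v)
                  = v ⟨ch c e k, ch_mem_W pa c e k⟩)
            then q e u else 0)
          = ∏ k : Fin (childSet c e).card,
              cpr Ptilde (ch c e k) (Tset pa c e k)
                (v ⟨ch c e k, ch_mem_W pa c e k⟩)
                (restr2 (T_subset_W pa c e k) v))) := by
  intro q hq0 hq1
  constructor
  · intro hQ e v
    have hb := bridgeA pa c hpa f q e (extv (Wset pa c e) v)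
    have hb2 := bridgeB pa c hpa Ptilde e (extv (Wset pa c e) v)
    rw [restr_extv] at hb hb2
    have key := AB_eq pa c hpa f q Ptilde hpos hq1 hQ hfact n le_rfl e (extv (Wset pa c e) v)
    exact hb.trans (key.trans hb2.symm)
  · intro hC x
    rw [Qfun_eq pa c hpa f q x, Ptilde_eq pa c hpa Ptilde hfact x]
    refine Finset.prod_congr rfl fun e _ => ?_
    have hagree : ∀ j : Fin n, j ∈ Wset pa c e → (j : ℕ) < n →
        x j = extv (Wset pa c e) (restr (Wset pa c e) x) j := by
      intro j hj _
      show x j = if h : j ∈ Wset pa c e then restr (Wset pa c e) x ⟨j, h⟩ else _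
      rw [dif_pos hj]
      rfl
    have hb := bridgeA pa c hpa f q e (extv (Wset pa c e) (restr (Wset pa c e) x))
    have hb2 := bridgeB pa c hpa Ptilde e (extv (Wset pa c e) (restr (Wset pa c e) x))
    rw [restr_extv] at hb hb2
    calc AA pa c f q e n x
        = AA pa c f q e n (extv (Wset pa c e) (restr (Wset pa c e) x)) :=
          AA_invar pa c hpa f q e n _ _ hagree
      _ = BB pa c Ptilde e n (extv (Wset pa c e) (restr (Wset pa c e) x)) :=
          hb.symm.trans ((hC e (restr (Wset pa c e) x)).trans hb2)
      _ = BB pa c Ptilde e n x :=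
          (BB_invar pa c hpa Ptilde e n _ _ hagree).symm
end

section
/- Assume the marginal P(x_1,x_2) := Σ_{x_3,u,u_3} P(x_1,x_2,x_3,u,u_3) is strictly positive for all x_1 ∈ Ω_1 and x_2 ∈ Ω_2. Then for every x_1 ∈ Ω_1 and x_3 ∈ Ω_3, the post-intervention probability P(x_3 ∣ do(x_1)) := Σ_{x_2,u,u_3} t(x_1)(x_2)(u_3)(x_3) · p_{U_3}(u_3) · b(u)(x_2) · p_U(u) equals the backdoor adjustment Σ_{x_2} P(x_3 ∣ x_1, x_2) · P(x_2), where P(x_3 ∣ x_1,x_2) := P(x_1,x_2,x_3)/P(x_1,x_2) and P(x_2) := Σ_{x_1,x_3,u,u_3} P(x_1,x_2,x_3,u,u_3). -/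
open Finset

/-- backdoor identification: in the model with arcs
`U→X_1`, `U→X_2`, `U_3→X_3`, `X_1→X_3`, `X_2→X_3`, the post-intervention probability
`P(x_3 | do(x_1))` equals the backdoor adjustment `Σ_{x_2} P(x_3 | x_1, x_2) · P(x_2)`. -/
theorem backdoor_adjustment
    (Ω1 Ω2 Ω3 ΩU ΩU3 : Type)
    [Fintype Ω1] [Fintype Ω2] [Fintype Ω3] [Fintype ΩU] [Fintype ΩU3]
    [Nonempty Ω1] [Nonempty Ω2] [Nonempty Ω3] [Nonempty ΩU] [Nonempty ΩU3]
    (pU : ΩU → ℝ) (hpU0 : ∀ u, 0 ≤ pU u) (hpU1 : ∑ u, pU u = 1)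
    (pU3 : ΩU3 → ℝ) (hpU30 : ∀ u3, 0 ≤ pU3 u3) (hpU31 : ∑ u3, pU3 u3 = 1)
    (a : ΩU → Ω1 → ℝ) (ha0 : ∀ u x1, 0 ≤ a u x1) (ha1 : ∀ u, ∑ x1, a u x1 = 1)
    (b : ΩU → Ω2 → ℝ) (hb0 : ∀ u x2, 0 ≤ b u x2) (hb1 : ∀ u, ∑ x2, b u x2 = 1)
    (t : Ω1 → Ω2 → ΩU3 → Ω3 → ℝ)
    (ht0 : ∀ x1 x2 u3 x3, 0 ≤ t x1 x2 u3 x3)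
    (ht1 : ∀ x1 x2 u3, ∑ x3, t x1 x2 u3 x3 = 1)
    (P : Ω1 → Ω2 → Ω3 → ΩU → ΩU3 → ℝ)
    (hP : ∀ x1 x2 x3 u u3,
      P x1 x2 x3 u u3 = pU u * pU3 u3 * a u x1 * b u x2 * t x1 x2 u3 x3)
    (hpos : ∀ x1 x2, 0 < ∑ x3, ∑ u, ∑ u3, P x1 x2 x3 u u3) :
    ∀ (x1 : Ω1) (x3 : Ω3),
      (∑ x2, ∑ u, ∑ u3, t x1 x2 u3 x3 * pU3 u3 * b u x2 * pU u)
        = ∑ x2, ((∑ u, ∑ u3, P x1 x2 x3 u u3) / (∑ x3', ∑ u, ∑ u3, P x1 x2 x3' u u3))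
            * (∑ x1', ∑ x3', ∑ u, ∑ u3, P x1' x2 x3' u u3) := by

  intro x1 x3
  refine Finset.sum_congr rfl ?_
  intro x2 _
  have hnum : ∀ x3' : Ω3, (∑ u, ∑ u3, P x1 x2 x3' u u3)
      = (∑ u, pU u * a u x1 * b u x2) * (∑ u3, pU3 u3 * t x1 x2 u3 x3') := by
    intro x3'
    rw [Finset.sum_mul_sum]
    refine Finset.sum_congr rfl fun u _ => Finset.sum_congr rfl fun u3 _ => ?_
    rw [hP]; ring
  have hden : (∑ x3', ∑ u, ∑ u3, P x1 x2 x3' u u3)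
      = ∑ u, pU u * a u x1 * b u x2 := by
    calc (∑ x3', ∑ u, ∑ u3, P x1 x2 x3' u u3)
        = ∑ x3', (∑ u, pU u * a u x1 * b u x2) * (∑ u3, pU3 u3 * t x1 x2 u3 x3') := by
          exact Finset.sum_congr rfl fun x3' _ => hnum x3'
      _ = (∑ u, pU u * a u x1 * b u x2) * ∑ u3, pU3 u3 * ∑ x3', t x1 x2 u3 x3' := by
          rw [← Finset.mul_sum, Finset.sum_comm]
          simp [Finset.mul_sum]
      _ = ∑ u, pU u * a u x1 * b u x2 := by
          simp [ht1, hpU31]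
  have hmarg : (∑ x1', ∑ x3', ∑ u, ∑ u3, P x1' x2 x3' u u3)
      = ∑ u, pU u * b u x2 := by
    have h1 : ∀ x1' : Ω1, (∑ x3', ∑ u, ∑ u3, P x1' x2 x3' u u3)
        = ∑ u, pU u * a u x1' * b u x2 := by
      intro x1'
      calc (∑ x3', ∑ u, ∑ u3, P x1' x2 x3' u u3)
          = ∑ x3', (∑ u, pU u * a u x1' * b u x2) * (∑ u3, pU3 u3 * t x1' x2 u3 x3') := by
            refine Finset.sum_congr rfl fun x3' _ => ?_
            rw [Finset.sum_mul_sum]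
            refine Finset.sum_congr rfl fun u _ => Finset.sum_congr rfl fun u3 _ => ?_
            rw [hP]; ring
        _ = (∑ u, pU u * a u x1' * b u x2) * ∑ u3, pU3 u3 * ∑ x3', t x1' x2 u3 x3' := by
            rw [← Finset.mul_sum, Finset.sum_comm]
            simp [Finset.mul_sum]
        _ = ∑ u, pU u * a u x1' * b u x2 := by
            simp [ht1, hpU31]
    calc (∑ x1', ∑ x3', ∑ u, ∑ u3, P x1' x2 x3' u u3)
        = ∑ x1', ∑ u, pU u * a u x1' * b u x2 := Finset.sum_congr rfl fun x1' _ => h1 x1'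
      _ = ∑ u, pU u * (∑ x1', a u x1') * b u x2 := by
          rw [Finset.sum_comm]
          simp [Finset.mul_sum, Finset.sum_mul, mul_assoc]
      _ = ∑ u, pU u * b u x2 := by simp [ha1]
  have hS : (∑ u, pU u * a u x1 * b u x2) ≠ 0 := by
    have := hpos x1 x2
    rw [hden] at this
    exact ne_of_gt this
  have hlhs : (∑ u, ∑ u3, t x1 x2 u3 x3 * pU3 u3 * b u x2 * pU u)
      = (∑ u3, pU3 u3 * t x1 x2 u3 x3) * (∑ u, pU u * b u x2) := by
    rw [Finset.sum_mul_sum, Finset.sum_comm]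
    refine Finset.sum_congr rfl fun u _ => Finset.sum_congr rfl fun u3 _ => ?_
    ring
  rw [hlhs, hnum x3, hden, hmarg, mul_comm (∑ u, pU u * a u x1 * b u x2),
    mul_div_assoc, div_self hS, mul_one]
end
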